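/- arXiv:2108.07902 — 10 statements merged into one kernel-verified Lean document; each statement's English description precedes it below -/
import Mathlib

section
/- Let G₀ be a finite abelian group, G = ℤ × G₀, J ≥ 1, F₁,…,F_J finite subsets of G, and E ⊆ G a periodic set. If there exist sets A₁,…,A_J ⊆ G with A₁ ⊕ F₁, …, A_J ⊕ F_J pairwise disjoint and their union equal to E, then there exist periodic sets A₁',…,A_J' ⊆ G with the same property. (Periodic tiling in one dimension.) -/
open Pointwise

/-- `A ⊕ F` is defined: all sums `a + f` with `a ∈ A`, `f ∈ F` are distinct. -/
def DistinctSums {G : Type*} [AddCommGroup G] (A F : Set G) : Prop :=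
  ∀ a ∈ A, ∀ f ∈ F, ∀ a' ∈ A, ∀ f' ∈ F, a + f = a' + f' → a = a' ∧ f = f'

/-- The tiling equation `⨄_j A_j ⊕ F_j = E`: each sumset is defined, the sumsets are
pairwise disjoint, and their union is `E`. -/
def TileSystem {G : Type*} [AddCommGroup G] {J : ℕ} (A F : Fin J → Set G) (E : Set G) : Prop :=
  (∀ j, DistinctSums (A j) (F j)) ∧
  (∀ i j, i ≠ j → Disjoint (A i + F i) (A j + F j)) ∧
  (⋃ j, A j + F j) = E

/-- A subset of `ℤ × G₀` is periodic if it is invariant under translation by `(r, 0)`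
for some positive integer `r`. -/
def OnePeriodic {G₀ : Type*} [AddCommGroup G₀] (A : Set (ℤ × G₀)) : Prop :=
  ∃ r : ℤ, 0 < r ∧ ∀ x : ℤ × G₀, x ∈ A ↔ x + (r, 0) ∈ A

/-!
Record a tiling by the labelling `c : G → Option (Fin J × G)` that tells, for each `x ∈ E`, which
tile `F j` covers `x` and at which of its elements `f`. Being a tiling is a local condition on `c`:
it only compares labels at points whose first coordinates differ by at most `2N`, where `N` bounds
the first coordinates of the tiles. Since `c` takes finitely many values and `G₀` is finite, the
pigeonhole principle gives two windows of half-width `2N`, at a distance `p` that is a multiple of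
the period of `E`, on which `c` agrees. Folding the first coordinate into the strip `[a, a + p)`
starting at the first window gives a `p`-periodic labelling, and it is still a tiling: a tile that
crosses the seam of the strip is glued correctly because the two windows agree.
-/

section Labelling

variable {G : Type*} [AddCommGroup G] {J : ℕ} {A F : Fin J → Set G} {E : Set G}

theorem TileSystem.eq_of_add_eq (h : TileSystem A F E) {i j : Fin J} {a a' f f' : G}
    (ha : a ∈ A i) (hf : f ∈ F i) (ha' : a' ∈ A j) (hf' : f' ∈ F j) (he : a + f = a' + f') :
    i = j ∧ f = f' := by
  obtain rfl : i = j := by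
    by_contra hij
    exact Set.disjoint_left.1 (h.2.1 i j hij) (Set.add_mem_add ha hf)
      (he ▸ Set.add_mem_add ha' hf')
  exact ⟨rfl, (h.1 i a ha f hf a' ha' f' hf' he).2⟩

/-- `c x = some (j, f)` says that `x` is covered by the tile `F j`, placed at `x - f`;
`c x = none` means `x ∉ E`. -/
def IsTileLabelling (F : Fin J → Set G) (E : Set G) (c : G → Option (Fin J × G)) : Prop :=
  (∀ x, x ∈ E ↔ (c x).isSome) ∧
  ∀ x j f, c x = some (j, f) → f ∈ F j ∧ ∀ f' ∈ F j, c (x - f + f') = some (j, f')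

theorem TileSystem.exists_isTileLabelling (h : TileSystem A F E) :
    ∃ c, IsTileLabelling F E c := by
  classical
  let covers (x : G) (jf : Fin J × G) : Prop := jf.2 ∈ F jf.1 ∧ x - jf.2 ∈ A jf.1
  have mem_iff : ∀ x, x ∈ E ↔ ∃ jf, covers x jf := by
    intro x
    simp only [← h.2.2, Set.mem_iUnion, Set.mem_add, covers]
    constructor
    · rintro ⟨j, a, ha, f, hf, rfl⟩
      exact ⟨(j, f), hf, by simpa using ha⟩
    · rintro ⟨⟨j, f⟩, hf, ha⟩
      exact ⟨j, x - f, ha, f, hf, sub_add_cancel x f⟩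
  refine ⟨fun x => if hx : ∃ jf, covers x jf then some hx.choose else none, ?_, ?_⟩
  · intro x
    by_cases hx : ∃ jf, covers x jf <;> simp [hx, mem_iff]
  · intro x j f hc
    by_cases hx : ∃ jf, covers x jf
    · obtain ⟨hf, ha⟩ : covers x (j, f) := by
        simp only [hx, dif_pos, Option.some_inj] at hc
        exact hc ▸ hx.choose_spec
      refine ⟨hf, fun f' hf' => ?_⟩
      have hy : ∃ jf, covers (x - f + f') jf := ⟨(j, f'), hf', by simpa using ha⟩
      obtain ⟨hf'', ha''⟩ := hy.choose_spec
      obtain ⟨hj, hff'⟩ := h.eq_of_add_eq ha'' hf'' ha hf' (sub_add_cancel _ _)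
      simp only [hy, dif_pos, Option.some_inj]
      exact Prod.ext hj hff'
    · simp [hx] at hc

def labelledTranslates (F : Fin J → Set G) (c : G → Option (Fin J × G)) (j : Fin J) : Set G :=
  {a | ∃ f ∈ F j, c (a + f) = some (j, f)}

variable {c : G → Option (Fin J × G)}

theorem IsTileLabelling.apply_add (hc : IsTileLabelling F E c) {j : Fin J} {a f : G}
    (ha : a ∈ labelledTranslates F c j) (hf : f ∈ F j) : c (a + f) = some (j, f) := by
  obtain ⟨f₀, -, hf₀⟩ := ha
  simpa using (hc.2 _ _ _ hf₀).2 f hf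

theorem IsTileLabelling.mem_labelledTranslates_add (hc : IsTileLabelling F E c) {j : Fin J}
    {x : G} : x ∈ labelledTranslates F c j + F j ↔ ∃ f ∈ F j, c x = some (j, f) := by
  constructor
  · rintro ⟨a, ha, f, hf, rfl⟩
    exact ⟨f, hf, hc.apply_add ha hf⟩
  · rintro ⟨f, hf, hx⟩
    exact ⟨x - f, ⟨f, hf, by simpa using hx⟩, f, hf, sub_add_cancel x f⟩

theorem IsTileLabelling.tileSystem (hc : IsTileLabelling F E c) :
    TileSystem (labelledTranslates F c) F E := by
  refine ⟨?_, ?_, ?_⟩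
  · intro j a ha f hf a' ha' f' hf' he
    have hff' := hc.apply_add ha hf
    rw [he, hc.apply_add ha' hf', Option.some_inj, Prod.mk.injEq] at hff'
    obtain rfl := hff'.2
    exact ⟨add_right_cancel he, rfl⟩
  · intro i j hij
    refine Set.disjoint_left.2 fun x hi hj => hij ?_
    obtain ⟨f, -, hf⟩ := hc.mem_labelledTranslates_add.1 hi
    obtain ⟨f', -, hf'⟩ := hc.mem_labelledTranslates_add.1 hj
    rw [hf, Option.some_inj, Prod.mk.injEq] at hf'
    exact hf'.1
  · ext x
    simp only [Set.mem_iUnion, hc.mem_labelledTranslates_add, hc.1 x, Option.isSome_iff_exists]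
    constructor
    · rintro ⟨j, f, -, hx⟩
      exact ⟨(j, f), hx⟩
    · rintro ⟨⟨j, f⟩, hx⟩
      exact ⟨j, f, (hc.2 x j f hx).1, hx⟩

theorem IsTileLabelling.finite_range (hF : ∀ j, (F j).Finite) (hc : IsTileLabelling F E c) :
    (Set.range c).Finite := by
  refine ((Set.finite_iUnion fun j => (hF j).image fun f => some (j, f)).insert none).subset ?_
  rintro _ ⟨x, rfl⟩
  cases hx : c x with
  | none => exact Set.mem_insert _ _
  | some jf => exact Or.inr (Set.mem_iUnion.2 ⟨jf.1, jf.2, (hc.2 x _ _ hx).1, rfl⟩)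

theorem add_mem_labelledTranslates_iff {v : G} (hv : Function.Periodic c v) {j : Fin J} {a : G} :
    a + v ∈ labelledTranslates F c j ↔ a ∈ labelledTranslates F c j := by
  simp only [labelledTranslates, Set.mem_ofPred_eq, add_right_comm a v, hv _]

end Labelling

section Strip

variable {G₀ : Type*}

theorem exists_abs_fst_le {S : Set (ℤ × G₀)} (hS : S.Finite) :
    ∃ N : ℤ, 0 ≤ N ∧ ∀ f ∈ S, |f.1| ≤ N := by
  obtain ⟨b, hb⟩ := (hS.image fun f => |f.1|).bddAbove
  exact ⟨max b 0, le_max_right _ _, fun f hf => (hb ⟨f, hf, rfl⟩).trans (le_max_left _ _)⟩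

/-- Pigeonhole over the windows of half-width `M` centred at the points `k * R`, `k : ℕ`. -/
theorem exists_window_eq_shift [Finite G₀] {α : Type*} {c : ℤ × G₀ → α}
    (hc : (Set.range c).Finite) (M R : ℤ) :
    ∃ a : ℤ, ∃ m : ℕ, 0 < m ∧ ∀ u v, |u - a| ≤ M → c (u + m * R, v) = c (u, v) := by
  let window (k : ℕ) (w : Set.Icc (-M) M × G₀) : α := c (k * R + w.1, w.2)
  have hmem (k : ℕ) : window k ∈ Set.univ.pi fun _ => Set.range c := fun w _ => ⟨_, rfl⟩
  obtain ⟨k, k', hkk', hwin⟩ :=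
    (Set.Finite.pi fun _ => hc).exists_lt_map_eq_of_forall_mem hmem
  obtain ⟨m, rfl⟩ := Nat.exists_eq_add_of_lt hkk'
  refine ⟨k * R, m + 1, m.succ_pos, fun u v hu => ?_⟩
  have := congrFun hwin (⟨u - k * R, abs_le.1 hu⟩, v)
  simp only [window, add_sub_cancel] at this
  rw [this]
  congr 2
  push_cast
  ring

variable {α : Type*} {c : ℤ × G₀ → α} {a p M : ℤ} (hp : 0 < p)

include hp in
theorem apply_toIcoMod_eq (hM : M < p)
    (hwin : ∀ u v, |u - a| ≤ M → c (u + p, v) = c (u, v)) {e : ℤ} (he : a - M ≤ e)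
    (he' : e < a + p + M) (v : G₀) : c (toIcoMod hp a e, v) = c (e, v) := by
  rcases lt_or_ge e a with hea | hae
  · rw [← toIcoMod_add_right, (toIcoMod_eq_self hp).2 ⟨by linarith, by linarith⟩,
      hwin e v (abs_le.2 ⟨by linarith, by linarith⟩)]
  rcases lt_or_ge e (a + p) with hep | hpe
  · rw [(toIcoMod_eq_self hp).2 ⟨hae, hep⟩]
  · have := hwin (e - p) v (abs_le.2 ⟨by linarith, by linarith⟩)
    rw [sub_add_cancel] at this
    rw [← toIcoMod_sub, (toIcoMod_eq_self hp).2 ⟨by linarith, by linarith⟩, this]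

end Strip

section Fold

variable {G₀ : Type*} [AddCommGroup G₀] {J : ℕ} {F : Fin J → Set (ℤ × G₀)} {E : Set (ℤ × G₀)}
  {c : ℤ × G₀ → Option (Fin J × (ℤ × G₀))} {a p N : ℤ} (hp : 0 < p)

include hp in
theorem toIcoMod_fst_eq_sub_zsmul (x : ℤ × G₀) :
    (toIcoMod hp a x.1, x.2) = x - toIcoDiv hp a x.1 • (p, 0) := by
  ext
  · simpa using (self_sub_toIcoDiv_mul hp a x.1).symm
  · simp

theorem IsTileLabelling.fold (hc : IsTileLabelling F E c) (hE : Function.Periodic (· ∈ E) (p, 0))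
    (hN : ∀ j, ∀ f ∈ F j, |f.1| ≤ N) (h2N : 2 * N < p)
    (hwin : ∀ u v, |u - a| ≤ 2 * N → c (u + p, v) = c (u, v)) :
    IsTileLabelling F E fun x => c (toIcoMod hp a x.1, x.2) := by
  refine ⟨fun x => ?_, fun x j f hx => ?_⟩
  · rw [← hc.1, toIcoMod_fst_eq_sub_zsmul hp]
    exact Iff.of_eq (hE.sub_zsmul_eq _).symm
  obtain ⟨hf, hstep⟩ := hc.2 _ j f hx
  refine ⟨hf, fun f' hf' => ?_⟩
  obtain ⟨hsa, hsp⟩ := toIcoMod_mem_Ico hp a x.1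
  obtain ⟨hf₁, hf₁'⟩ := abs_le.1 (hN j f hf)
  obtain ⟨hf'₁, hf'₁'⟩ := abs_le.1 (hN j f' hf')
  have hshift :
      toIcoMod hp a (x.1 - f.1 + f'.1) = toIcoMod hp a (toIcoMod hp a x.1 - f.1 + f'.1) :=
    (toIcoMod_eq_toIcoMod hp).2 ⟨-toIcoDiv hp a x.1, by rw [← toIcoMod_sub_self]; abel⟩
  change c (toIcoMod hp a (x.1 - f.1 + f'.1), x.2 - f.2 + f'.2) = some (j, f')
  rw [hshift, apply_toIcoMod_eq hp (by linarith) hwin (by linarith) (by linarith)]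
  exact hstep f' hf'

end Fold

theorem statement1_general {G₀ : Type*} [AddCommGroup G₀] [Fintype G₀] (J : ℕ)
    (F : Fin J → Set (ℤ × G₀)) (hF : ∀ j, (F j).Finite)
    (E : Set (ℤ × G₀)) (hE : OnePeriodic E)
    (A : Fin J → Set (ℤ × G₀)) (hA : TileSystem A F E) :
    ∃ A' : Fin J → Set (ℤ × G₀), (∀ j, OnePeriodic (A' j)) ∧ TileSystem A' F E := by
  obtain ⟨c, hc⟩ := hA.exists_isTileLabelling
  obtain ⟨r, hr, hEr⟩ := hE
  obtain ⟨N, hN0, hN⟩ := exists_abs_fst_le (Set.finite_iUnion hF)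
  obtain ⟨a, m, hm, hwin⟩ := exists_window_eq_shift (hc.finite_range hF) (2 * N) (r * (2 * N + 1))
  set p : ℤ := m * (r * (2 * N + 1))
  have hp : 0 < p := by positivity
  have h2N : 2 * N < p := calc
    2 * N < r * (2 * N + 1) := by nlinarith
    _ ≤ p := le_mul_of_one_le_left (by positivity) (by exact_mod_cast hm)
  have hEp : Function.Periodic (· ∈ E) (p, 0) := by
    have hEr' : Function.Periodic (· ∈ E) (r, 0) := fun x => propext (hEr x).symm
    have hpr : ((p, 0) : ℤ × G₀) = (m * (2 * N + 1) : ℤ) • (r, 0) := by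
      ext <;> simp only [p, Prod.smul_mk, smul_eq_mul, smul_zero]; ring
    exact hpr ▸ hEr'.zsmul _
  have hc' := hc.fold hp hEp (fun j f hf => hN f (Set.mem_iUnion.2 ⟨j, hf⟩)) h2N hwin
  have hper : Function.Periodic (fun x : ℤ × G₀ => c (toIcoMod hp a x.1, x.2)) (p, 0) := by
    intro x
    simp [toIcoMod_add_right]
  exact ⟨_, fun j => ⟨p, hp, fun x => (add_mem_labelledTranslates_iff hper).symm⟩, hc'.tileSystem⟩

theorem statement1 {G₀ : Type*} [AddCommGroup G₀] [Fintype G₀] (J : ℕ) (hJ : 1 ≤ J)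
    (F : Fin J → Set (ℤ × G₀)) (hF : ∀ j, (F j).Finite)
    (E : Set (ℤ × G₀)) (hE : OnePeriodic E)
    (A : Fin J → Set (ℤ × G₀)) (hA : TileSystem A F E) :
    ∃ A' : Fin J → Set (ℤ × G₀), (∀ j, OnePeriodic (A' j)) ∧ TileSystem A' F E :=
  statement1_general J F hF E hE A hA
end

section
/- Let G = ℤ^d × G₀ with G₀ a finite abelian group, J, M ≥ 1, N > M. For m = 1,…,M let F₁^(m),…,F_J^(m) be finite nonempty subsets of G and E₀^(m) ⊆ G₀. Define F̃_j = ⋃_{m=1}^M F_j^(m) × {m} ⊆ G × ℤ_N and Ẽ₀ = ⋃_{m=1}^M E₀^(m) × {m} ⊆ G₀ × ℤ_N. Then subsets A₁,…,A_J ⊆ G solve the system of tiling equations ⋃_j A_j ⊕ F_j^(m) = ℤ^d × E₀^(m) (disjointly) for all m, if and only if the sets Ã_j = A_j × {0} solve the single tiling equation ⋃_j Ã_j ⊕ F̃_j = ℤ^d × Ẽ₀ (disjointly); moreover every solution (B₁,…,B_J) in G × ℤ_N of the latter equation satisfies B_j ⊆ G × {0} for all j. -/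
open Pointwise

lemma castinj {M N : ℕ} (hN : M < N) {a b : ℕ} (ha : a ≤ M) (hb : b ≤ M)
    (h : (a : ZMod N) = (b : ZMod N)) : a = b := by
  haveI : NeZero N := ⟨by omega⟩
  have h2 := congrArg ZMod.val h
  rwa [ZMod.val_natCast, ZMod.val_natCast, Nat.mod_eq_of_lt (by omega),
    Nat.mod_eq_of_lt (by omega)] at h2

lemma minj {M N : ℕ} (hN : M < N) {m m' : Fin M}
    (h : (((m : ℕ) + 1 : ℕ) : ZMod N) = (((m' : ℕ) + 1 : ℕ) : ZMod N)) : m = m' := by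
  have h1 := castinj hN (Nat.succ_le_of_lt m.isLt) (Nat.succ_le_of_lt m'.isLt) h
  exact Fin.ext (by omega)

lemma key_zero {M N : ℕ} (hM : 1 ≤ M) (hN : M < N) (t : ZMod N)
    (h : ∀ m : Fin M, ∃ m' : Fin M,
      t + (((m : ℕ) + 1 : ℕ) : ZMod N) = (((m' : ℕ) + 1 : ℕ) : ZMod N)) : t = 0 := by
  haveI : NeZero N := ⟨by omega⟩
  choose f hf using h
  have hinj : Function.Injective f := by
    intro m₁ m₂ he
    have : t + (((m₁ : ℕ) + 1 : ℕ) : ZMod N) = t + (((m₂ : ℕ) + 1 : ℕ) : ZMod N) := by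
      rw [hf, hf, he]
    exact minj hN (add_left_cancel this)
  have hsurj := (Finite.injective_iff_surjective.mp hinj)
  obtain ⟨m, hm⟩ := hsurj ⟨M - 1, by omega⟩
  have hfm := hf m
  rw [hm] at hfm
  have hM1 : ((M - 1 : ℕ) + 1 : ℕ) = M := by omega
  rw [hM1] at hfm
  by_cases hmv : (m : ℕ) + 1 = M
  · rw [hmv] at hfm
    have : t + (M : ZMod N) = 0 + (M : ZMod N) := by rw [hfm, zero_add]
    exact add_right_cancel this
  · exfalso
    have hlt : (m : ℕ) + 1 < M := lt_of_le_of_ne (Nat.succ_le_of_lt m.isLt) hmv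
    set m₂ : Fin M := ⟨(m : ℕ) + 1, hlt⟩ with hm₂
    have hfm2 := hf m₂
    have hc : t + ((((m₂ : ℕ)) + 1 : ℕ) : ZMod N) = ((M + 1 : ℕ) : ZMod N) := by
      have : (((m₂ : ℕ) + 1 : ℕ) : ZMod N) = (((m : ℕ) + 1 : ℕ) : ZMod N) + 1 := by
        simp [hm₂]
      rw [this, ← add_assoc, hfm]
      push_cast; ring
    rw [hfm2] at hc
    have hmod : ((f m₂ : ℕ) + 1) ≡ (M + 1) [MOD N] := (ZMod.natCast_eq_natCast_iff _ _ _).mp hc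
    have hdvd := (Nat.modEq_iff_dvd' (by have := (f m₂).isLt; omega)).mp hmod
    have h1 : (f m₂ : ℕ) < M := (f m₂).isLt
    have := Nat.le_of_dvd (by omega) hdvd
    omega

theorem statement2 {G₀ : Type*} [AddCommGroup G₀] [Fintype G₀]
    (d J M N : ℕ) (hJ : 1 ≤ J) (hM : 1 ≤ M) (hN : M < N)
    (F : Fin J → Fin M → Set ((Fin d → ℤ) × G₀))
    (hFne : ∀ j m, (F j m).Nonempty) (hFfin : ∀ j m, (F j m).Finite)
    (E₀ : Fin M → Set G₀) :
    (∀ A : Fin J → Set ((Fin d → ℤ) × G₀),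
      (∀ m, TileSystem A (fun j => F j m) {p | p.2 ∈ E₀ m}) ↔
        TileSystem (fun j => (A j) ×ˢ ({0} : Set (ZMod N)))
          (fun j => {p : ((Fin d → ℤ) × G₀) × ZMod N |
              ∃ m : Fin M, p.1 ∈ F j m ∧ p.2 = (((m : ℕ) + 1 : ℕ) : ZMod N)})
          {p : ((Fin d → ℤ) × G₀) × ZMod N |
              ∃ m : Fin M, p.1.2 ∈ E₀ m ∧ p.2 = (((m : ℕ) + 1 : ℕ) : ZMod N)}) ∧
    (∀ B : Fin J → Set (((Fin d → ℤ) × G₀) × ZMod N),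
      TileSystem B
          (fun j => {p : ((Fin d → ℤ) × G₀) × ZMod N |
              ∃ m : Fin M, p.1 ∈ F j m ∧ p.2 = (((m : ℕ) + 1 : ℕ) : ZMod N)})
          {p : ((Fin d → ℤ) × G₀) × ZMod N |
              ∃ m : Fin M, p.1.2 ∈ E₀ m ∧ p.2 = (((m : ℕ) + 1 : ℕ) : ZMod N)} →
      ∀ j, B j ⊆ {p | p.2 = 0}) := by
  constructor
  · intro A
    -- key membership lemma
    have hmem : ∀ (j : Fin J) (m : Fin M) (x : (Fin d → ℤ) × G₀),
        ((x, (((m : ℕ) + 1 : ℕ) : ZMod N)) ∈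
          (A j ×ˢ ({0} : Set (ZMod N))) + {p : ((Fin d → ℤ) × G₀) × ZMod N |
              ∃ m' : Fin M, p.1 ∈ F j m' ∧ p.2 = (((m' : ℕ) + 1 : ℕ) : ZMod N)}) ↔
        x ∈ A j + F j m := by
      intro j m x
      constructor
      · rintro hx
        rw [Set.mem_add] at hx
        obtain ⟨⟨a, z⟩, ⟨haA, hz⟩, ⟨g, s⟩, ⟨m', hg, hs⟩, heq⟩ := hx
        simp only [Set.mem_singleton_iff] at hz
        subst hz
        simp only at hg hs
        subst hs
        have h2 : (((m' : ℕ) + 1 : ℕ) : ZMod N) = (((m : ℕ) + 1 : ℕ) : ZMod N) := by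
          have := congrArg Prod.snd heq
          simpa using this
        have hm : m' = m := minj hN h2
        subst hm
        have h1 : a + g = x := congrArg Prod.fst heq
        exact Set.mem_add.mpr ⟨a, haA, g, hg, h1⟩
      · rintro hx
        rw [Set.mem_add] at hx
        obtain ⟨a, haA, g, hg, rfl⟩ := hx
        exact Set.mem_add.mpr ⟨(a, 0), ⟨haA, rfl⟩, (g, (((m : ℕ) + 1 : ℕ) : ZMod N)),
          ⟨m, hg, rfl⟩, by ext <;> simp⟩
    constructor
    · intro h
      refine ⟨?_, ?_, ?_⟩
      · rintro j ⟨a, z⟩ ha ⟨g, t⟩ hg ⟨a', z'⟩ ha' ⟨g', t'⟩ hg' heq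
        obtain ⟨m, hgm, rfl⟩ := hg
        obtain ⟨m', hgm', rfl⟩ := hg'
        obtain ⟨haA, hz⟩ := ha
        obtain ⟨haA', hz'⟩ := ha'
        simp only [Set.mem_singleton_iff] at hz hz'
        subst hz; subst hz'
        have h2 : (((m : ℕ) + 1 : ℕ) : ZMod N) = (((m' : ℕ) + 1 : ℕ) : ZMod N) := by
          have := congrArg Prod.snd heq
          simpa using this
        have hmm : m = m' := minj hN h2
        subst hmm
        have h1 : a + g = a' + g' := by
          have := congrArg Prod.fst heq
          simpa using this
        obtain ⟨hae, hge⟩ := (h m).1 j a haA g hgm a' haA' g' hgm' h1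
        subst hae; subst hge
        exact ⟨rfl, by rw [h2]⟩
      · intro i j hij
        rw [Set.disjoint_left]
        rintro ⟨x, t⟩ hi hj
        rw [Set.mem_add] at hi hj
        obtain ⟨⟨a, z⟩, ⟨haA, hz⟩, ⟨g, s⟩, ⟨m, hgm, hs⟩, heq⟩ := hi
        obtain ⟨⟨a', z'⟩, ⟨haA', hz'⟩, ⟨g', s'⟩, ⟨m', hgm', hs'⟩, heq'⟩ := hj
        simp only [Set.mem_singleton_iff] at hz hz'
        subst hz; subst hz'
        simp only at hs hs' hgm hgm'
        subst hs; subst hs'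
        have ht : t = (((m : ℕ) + 1 : ℕ) : ZMod N) := by
          have := congrArg Prod.snd heq; simpa using this.symm
        have ht' : t = (((m' : ℕ) + 1 : ℕ) : ZMod N) := by
          have := congrArg Prod.snd heq'; simpa using this.symm
        have hmm : m = m' := minj hN (ht ▸ ht')
        subst hmm
        have hx1 : x ∈ A i + F i m :=
          Set.mem_add.mpr ⟨a, haA, g, hgm, congrArg Prod.fst heq⟩
        have hx2 : x ∈ A j + F j m :=
          Set.mem_add.mpr ⟨a', haA', g', hgm', congrArg Prod.fst heq'⟩
        exact Set.disjoint_left.mp ((h m).2.1 i j hij) hx1 hx2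
      · ext ⟨x, t⟩
        simp only [Set.mem_iUnion, Set.mem_setOf_eq]
        constructor
        · rintro ⟨j, hx⟩
          rw [Set.mem_add] at hx
          obtain ⟨⟨a, z⟩, ⟨haA, hz⟩, ⟨g, s⟩, ⟨m, hgm, hs⟩, heq⟩ := hx
          simp only [Set.mem_singleton_iff] at hz
          subst hz
          simp only at hs hgm
          subst hs
          refine ⟨m, ?_, ?_⟩
          · have hx1 : x ∈ A j + F j m :=
              Set.mem_add.mpr ⟨a, haA, g, hgm, congrArg Prod.fst heq⟩
            have : x ∈ ⋃ j', A j' + F j' m := Set.mem_iUnion.mpr ⟨j, hx1⟩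
            rw [(h m).2.2] at this
            exact this
          · have := congrArg Prod.snd heq; simpa using this.symm
        · rintro ⟨m, hE, rfl⟩
          have : x ∈ ⋃ j', A j' + F j' m := by rw [(h m).2.2]; exact hE
          obtain ⟨j, hj⟩ := Set.mem_iUnion.mp this
          exact ⟨j, (hmem j m x).mpr hj⟩
    · intro hT m
      refine ⟨?_, ?_, ?_⟩
      · intro j a haA g hg a' haA' g' hg' heq
        have := hT.1 j (a, 0) ⟨haA, rfl⟩ (g, (((m : ℕ) + 1 : ℕ) : ZMod N)) ⟨m, hg, rfl⟩
          (a', 0) ⟨haA', rfl⟩ (g', (((m : ℕ) + 1 : ℕ) : ZMod N)) ⟨m, hg', rfl⟩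
          (by ext <;> simp [heq])
        obtain ⟨h1, h2⟩ := this
        exact ⟨congrArg Prod.fst h1, congrArg Prod.fst h2⟩
      · intro i j hij
        rw [Set.disjoint_left]
        intro x hx1 hx2
        have h1 := (hmem i m x).mpr hx1
        have h2 := (hmem j m x).mpr hx2
        exact Set.disjoint_left.mp (hT.2.1 i j hij) h1 h2
      · ext x
        simp only [Set.mem_iUnion, Set.mem_setOf_eq]
        constructor
        · rintro ⟨j, hj⟩
          have : (x, (((m : ℕ) + 1 : ℕ) : ZMod N)) ∈ ⋃ j', (A j' ×ˢ ({0} : Set (ZMod N))) +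
              {p : ((Fin d → ℤ) × G₀) × ZMod N |
                ∃ m' : Fin M, p.1 ∈ F j' m' ∧ p.2 = (((m' : ℕ) + 1 : ℕ) : ZMod N)} :=
            Set.mem_iUnion.mpr ⟨j, (hmem j m x).mpr hj⟩
          rw [hT.2.2] at this
          obtain ⟨m', hE, hs⟩ := this
          have hmm : m' = m := minj hN (by simpa using hs.symm)
          subst hmm
          exact hE
        · intro hE
          have : (x, (((m : ℕ) + 1 : ℕ) : ZMod N)) ∈
              {p : ((Fin d → ℤ) × G₀) × ZMod N |
                ∃ m' : Fin M, p.1.2 ∈ E₀ m' ∧ p.2 = (((m' : ℕ) + 1 : ℕ) : ZMod N)} :=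
            ⟨m, hE, rfl⟩
          rw [← hT.2.2] at this
          obtain ⟨j, hj⟩ := Set.mem_iUnion.mp this
          exact ⟨j, (hmem j m x).mp hj⟩
  · intro B hB j p hp
    show p.2 = 0
    refine key_zero hM hN p.2 ?_
    intro m
    obtain ⟨g, hg⟩ := hFne j m
    have hmem : p + (g, (((m : ℕ) + 1 : ℕ) : ZMod N)) ∈ ⋃ j', B j' +
        {q : ((Fin d → ℤ) × G₀) × ZMod N |
          ∃ m' : Fin M, q.1 ∈ F j' m' ∧ q.2 = (((m' : ℕ) + 1 : ℕ) : ZMod N)} :=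
      Set.mem_iUnion.mpr ⟨j, Set.mem_add.mpr ⟨p, hp, (g, _), ⟨m, hg, rfl⟩, rfl⟩⟩
    rw [hB.2.2] at hmem
    obtain ⟨m', _, hs⟩ := hmem
    exact ⟨m', hs⟩
end

section
/- Let G = ℤ^d × G₀ × ℤ_N with N > M as in the combination construction. If B₁,…,B_J ⊆ G × ℤ_N solve the tiling equation ⋃_j B_j ⊕ F̃_j = ℤ^d × Ẽ₀ where F̃_j = ⋃_{m=1}^M F_j^(m) × {m} with each F_j^(m) nonempty, then every B_j is contained in G × {0}. -/
open Pointwise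

theorem statement3 {G₀ : Type*} [AddCommGroup G₀] [Fintype G₀]
    (d J M N : ℕ) (hJ : 1 ≤ J) (hM : 1 ≤ M) (hN : M < N)
    (F : Fin J → Fin M → Set ((Fin d → ℤ) × G₀))
    (hFne : ∀ j m, (F j m).Nonempty) (hFfin : ∀ j m, (F j m).Finite)
    (E₀ : Fin M → Set G₀)
    (B : Fin J → Set (((Fin d → ℤ) × G₀) × ZMod N))
    (hB : TileSystem B
        (fun j => {p : ((Fin d → ℤ) × G₀) × ZMod N |
            ∃ m : Fin M, p.1 ∈ F j m ∧ p.2 = (((m : ℕ) + 1 : ℕ) : ZMod N)})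
        {p : ((Fin d → ℤ) × G₀) × ZMod N |
            ∃ m : Fin M, p.1.2 ∈ E₀ m ∧ p.2 = (((m : ℕ) + 1 : ℕ) : ZMod N)}) :
    ∀ j, B j ⊆ {p | p.2 = 0} := by
  obtain ⟨hds, hdisj, hcover⟩ := hB
  haveI : NeZero N := ⟨by omega⟩
  intro j b hb
  set x := b.2 with hx
  have H : ∀ m : Fin M, ∃ m' : Fin M,
      x + (((m : ℕ) + 1 : ℕ) : ZMod N) = (((m' : ℕ) + 1 : ℕ) : ZMod N) := by
    intro m
    obtain ⟨f, hf⟩ := hFne j m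
    have hmem : b + (f, (((m : ℕ) + 1 : ℕ) : ZMod N)) ∈
        {p : ((Fin d → ℤ) × G₀) × ZMod N |
            ∃ m : Fin M, p.1.2 ∈ E₀ m ∧ p.2 = (((m : ℕ) + 1 : ℕ) : ZMod N)} := by
      rw [← hcover]
      refine Set.mem_iUnion.2 ⟨j, Set.add_mem_add hb ?_⟩
      exact ⟨m, hf, rfl⟩
    obtain ⟨m', _, h2⟩ := hmem
    exact ⟨m', h2⟩
  have hcastinj : ∀ a b : Fin M,
      (((a : ℕ) + 1 : ℕ) : ZMod N) = (((b : ℕ) + 1 : ℕ) : ZMod N) → a = b := by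
    intro a b h
    have hv := congrArg ZMod.val h
    rw [ZMod.val_natCast, ZMod.val_natCast] at hv
    have ha := a.2; have hb' := b.2
    rw [Nat.mod_eq_of_lt (by omega), Nat.mod_eq_of_lt (by omega)] at hv
    exact Fin.ext (by omega)
  choose g hg using H
  have hginj : Function.Injective g := by
    intro m₁ m₂ h
    have e : x + (((m₁ : ℕ) + 1 : ℕ) : ZMod N) = x + (((m₂ : ℕ) + 1 : ℕ) : ZMod N) := by
      rw [hg m₁, hg m₂, h]
    exact hcastinj _ _ (add_left_cancel e)
  have hgsurj : Function.Surjective g := Finite.surjective_of_injective hginj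
  obtain ⟨k, hk⟩ := hgsurj ⟨0, hM⟩
  have hk' := hg k
  rw [hk] at hk'
  simp only [Fin.val_mk] at hk'
  -- hk' : x + ((k+1 : ℕ) : ZMod N) = ((0+1 : ℕ) : ZMod N)
  by_cases hk0 : (k : ℕ) = 0
  · show b.2 = 0
    rw [← hx]
    have e1 : (k : ℕ) + 1 = 1 := by omega
    rw [e1] at hk'
    have h2 : x + 1 = 0 + 1 := by simpa using hk'
    exact add_right_cancel h2
  · exfalso
    have hklt : (k : ℕ) < M := k.2
    have hm : (k : ℕ) - 1 < M := by omega
    have h1 := hg ⟨(k : ℕ) - 1, hm⟩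
    simp only [Fin.val_mk] at h1
    have hsub : ((k : ℕ) - 1) + 1 = (k : ℕ) := by omega
    rw [hsub] at h1
    -- h1 : x + ((k:ℕ) : ZMod N) = ((g ⟨k-1,_⟩ + 1 : ℕ) : ZMod N)
    have h0 : x + (((k : ℕ) : ZMod N)) = 0 := by
      have : x + (((k : ℕ) + 1 : ℕ) : ZMod N) = ((0 + 1 : ℕ) : ZMod N) := hk'
      push_cast at this
      have h2 : x + ((k : ℕ) : ZMod N) + 1 = 0 + 1 := by
        rw [add_assoc, this, zero_add]
      exact add_right_cancel h2
    rw [h0] at h1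
    have hv := congrArg ZMod.val h1.symm
    rw [ZMod.val_natCast, ZMod.val_zero] at hv
    set m' := (g ⟨(k : ℕ) - 1, hm⟩ : ℕ)
    have hm' : m' < M := (g ⟨(k : ℕ) - 1, hm⟩).2
    rw [Nat.mod_eq_of_lt (by omega)] at hv
    omega
end

section
/- Let N₁,…,N_k ≥ 5 be integers, Λ₀ = N₁ℤ × ⋯ × N_kℤ ≤ ℤ^k, and let R ⊆ ℤ^k be obtained from the box R₀ = {0,…,N₁−1} × ⋯ × {0,…,N_k−1} by choosing integers n_j with 2 ≤ n_j ≤ N_j − 3, deleting the points (n₁,…,n_{j−1},0,n_{j+1},…,n_k) for each j = 1,…,k, and adding the points (n₁,…,n_{j−1},N_j,n_{j+1},…,n_k). Then a set A ⊆ ℤ^k satisfies A ⊕ R = ℤ^k if and only if A is a coset of Λ₀. -/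
open Pointwise

/-!
Write `p_j = update n j 0` and `q_j = update n j (N j) = p_j + N_j e_j`. Reducing coordinates
modulo `N` maps `R` bijectively onto the box (it sends `q_j` to `p_j`), so `R` is a transversal
of `Λ₀` and every coset of `Λ₀` tiles with `R`.

Conversely let `A ⊕ R = ℤ^k` and `a ∈ A`, and write `a + p_j = a' + r'`. Every `r' ∈ R` other
than `q_j` satisfies `p_j - r' ∈ R - R`, which would force `a = a'` and `p_j = r' ∈ R`; hence
`r' = q_j` and `a - N_j e_j ∈ A`. A set that tiles with `R` contains no proper subset that tiles
with `R`, so `A - N_j e_j = A`: `A` is `Λ₀`-periodic. A periodic tiling set for a transversal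
of `Λ₀` is a single coset.
-/

open Set Function

section Tiling

variable {G : Type*} [AddCommGroup G] {A R : Set G}

theorem distinctSums_setOf_sub_mem {L : AddSubgroup G} (hL : DistinctSums (L : Set G) R)
    (y : G) : DistinctSums {x | x - y ∈ L} R := by
  intro a ha f hf a' ha' f' hf' h
  have := hL _ ha f hf _ ha' f' hf' (by rw [sub_add_eq_add_sub, sub_add_eq_add_sub, h])
  exact ⟨sub_left_injective this.1, this.2⟩

theorem setOf_sub_mem_add_eq_univ {L : AddSubgroup G} (hL : (L : Set G) + R = univ) (y : G) :
    {x | x - y ∈ L} + R = univ := by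
  refine eq_univ_of_forall fun x => ?_
  obtain ⟨l, hl, r, hr, hlr⟩ := mem_add.1 (hL ▸ mem_univ (x - y))
  exact mem_add.2 ⟨l + y, by simpa using hl, r, hr, by rw [add_right_comm, hlr, sub_add_cancel]⟩

theorem distinctSums_and_add_eq_univ_of_invariant {β : Type*} {L : AddSubgroup G} {φ : G → β}
    (hφ : ∀ x y, φ x = φ y ↔ x - y ∈ L) (hinj : InjOn φ R) (hsurj : ∀ x, ∃ r ∈ R, φ r = φ x) :
    DistinctSums (L : Set G) R ∧ (L : Set G) + R = univ := by
  constructor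
  · intro l hl r hr l' hl' r' hr' h
    have hrr' : r - r' = l' - l := sub_eq_sub_iff_add_eq_add.2 (by rw [add_comm, h])
    obtain rfl : r = r' := hinj hr hr' ((hφ r r').2 (hrr' ▸ L.sub_mem hl' hl))
    exact ⟨add_right_cancel h, rfl⟩
  · refine eq_univ_of_forall fun x => ?_
    obtain ⟨r, hr, hφr⟩ := hsurj x
    exact mem_add.2 ⟨x - r, (hφ x r).1 hφr.symm, r, hr, sub_add_cancel x r⟩

theorem add_sub_mem_of_forall_sub_mem_sub (hA : DistinctSums A R) (hAR : A + R = univ) {p q : G}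
    (hp : p ∉ R) (hpq : ∀ r ∈ R, r ≠ q → p - r ∈ R - R) {a : G} (ha : a ∈ A) : a + p - q ∈ A := by
  obtain ⟨a', ha', r, hr, h⟩ := mem_add.1 (hAR ▸ mem_univ (a + p))
  obtain rfl : r = q := by
    by_contra hrq
    obtain ⟨f, hf, f', hf', hff'⟩ := mem_sub.1 (hpq r hr hrq)
    obtain rfl : a = a' := (hA a ha f hf a' ha' f' hf' (calc
      a + f = a + p - r + f' := by rw [add_sub_assoc, ← hff']; abel
      _ = a' + f' := by rw [← h]; abel)).1
    exact hp (add_left_cancel h ▸ hr)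
  rwa [← h, add_sub_cancel_right]

theorem add_mem_of_forall_sub_mem (hA : DistinctSums A R) (hAR : A + R = univ) (hR : R.Nonempty)
    {v : G} (hv : ∀ a ∈ A, a - v ∈ A) {a : G} (ha : a ∈ A) : a + v ∈ A := by
  obtain ⟨r, hr⟩ := hR
  obtain ⟨a', ha', r', hr', h⟩ := mem_add.1 (hAR ▸ mem_univ (a + v + r))
  have : a' - v = a := (hA _ (hv a' ha') r' hr' a ha r hr (by rw [sub_add_eq_add_sub, h]; abel)).1
  rwa [← this, sub_add_cancel]

theorem mem_stabilizer_of_forall_sub_mem (hA : DistinctSums A R) (hAR : A + R = univ)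
    (hR : R.Nonempty) {v : G} (hv : ∀ a ∈ A, a - v ∈ A) : v ∈ AddAction.stabilizer G A := by
  rw [AddAction.mem_stabilizer_iff]
  ext x
  rw [mem_vadd_set_iff_neg_vadd_mem, vadd_eq_add, neg_add_eq_sub]
  exact ⟨fun h => sub_add_cancel x v ▸ add_mem_of_forall_sub_mem hA hAR hR hv h, hv x⟩

theorem exists_eq_setOf_sub_mem {L : AddSubgroup G} (hL : (L : Set G) + R = univ)
    (hA : DistinctSums A R) (hAR : A + R = univ) (hper : L ≤ AddAction.stabilizer G A) :
    ∃ y, A = {x | x - y ∈ L} := by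
  have add_mem : ∀ a ∈ A, ∀ l ∈ L, a + l ∈ A := fun a ha l hl => by
    rw [← AddAction.mem_stabilizer_iff.1 (hper hl), add_comm]
    exact vadd_mem_vadd_set ha
  obtain ⟨y, hy, r, hr, -⟩ := mem_add.1 (hAR ▸ mem_univ (0 : G))
  refine ⟨y, Set.ext fun a => ⟨fun ha => ?_, fun ha => by simpa using add_mem y hy _ ha⟩⟩
  obtain ⟨l, hl, r', hr', h⟩ := mem_add.1 (hL ▸ mem_univ (y - a + r))
  have : a + l = y := (hA _ (add_mem a ha l hl) r' hr' y hy r hr (by rw [add_assoc, h]; abel)).1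
  simpa [← this] using L.neg_mem hl

end Tiling

section Lattice

variable {ι : Type*} {N n : ι → ℤ}

variable (N) in
def lattice : AddSubgroup (ι → ℤ) := AddSubgroup.pi univ fun j => AddSubgroup.zmultiples (N j)

theorem mem_lattice {x : ι → ℤ} : x ∈ lattice N ↔ ∀ j, N j ∣ x j := by
  simp [lattice, AddSubgroup.mem_pi, Int.mem_zmultiples_iff]

variable (N) in
def residue (x : ι → ℤ) : ι → ℤ := fun j => x j % N j

theorem residue_eq_residue_iff {x y : ι → ℤ} : residue N x = residue N y ↔ x - y ∈ lattice N := by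
  simp only [residue, funext_iff, mem_lattice, Pi.sub_apply, Int.emod_eq_emod_iff_emod_sub_eq_zero,
    Int.dvd_iff_emod_eq_zero]

variable (N) in
def box : Set (ι → ℤ) := {x | ∀ j, 0 ≤ x j ∧ x j < N j}

theorem mem_box_of_bounds (hn : ∀ j, 2 ≤ n j ∧ n j ≤ N j - 3) : n ∈ box N := fun j => by
  have := hn j; omega

theorem residue_of_mem_box {x : ι → ℤ} (hx : x ∈ box N) : residue N x = x :=
  funext fun j => Int.emod_eq_of_lt (hx j).1 (hx j).2

theorem residue_mem_box (hN : ∀ j, 0 < N j) (x : ι → ℤ) : residue N x ∈ box N :=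
  fun j => ⟨Int.emod_nonneg _ (hN j).ne', Int.emod_lt_of_pos _ (hN j)⟩

variable [DecidableEq ι]

theorem lattice_le_of_single_mem [Fintype ι] {H : AddSubgroup (ι → ℤ)}
    (h : ∀ j, Pi.single j (N j) ∈ H) : lattice N ≤ H := by
  intro x hx
  rw [← Finset.univ_sum_single x]
  refine H.sum_mem fun j _ => ?_
  obtain ⟨c, hc⟩ := mem_lattice.1 hx j
  rw [hc, mul_comm, ← smul_eq_mul, Pi.single_smul]
  exact H.zsmul_mem (h j) c

theorem single_mem_lattice (i : ι) : Pi.single i (N i) ∈ lattice N :=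
  mem_lattice.2 fun j => by
    rcases eq_or_ne j i with rfl | hji
    · simp
    · simp [hji]

theorem update_mem_box {x : ι → ℤ} (hx : x ∈ box N) {i : ι} {c : ℤ} (hc : 0 ≤ c ∧ c < N i) :
    update x i c ∈ box N := by
  intro j
  rcases eq_or_ne j i with rfl | hji
  · simpa using hc
  · simpa [hji] using hx j

variable (N n) in
def tile : Set (ι → ℤ) :=
  (box N \ range fun j => update n j 0) ∪ range fun j => update n j (N j)

theorem mem_tile_of_ne {x : ι → ℤ} (hx : x ∈ box N) (i : ι) (h0 : x i ≠ 0) (hn : x i ≠ n i) :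
    x ∈ tile N n := by
  refine Or.inl ⟨hx, ?_⟩
  rintro ⟨j, rfl⟩
  rcases eq_or_ne i j with rfl | hij
  · simp at h0
  · simp [hij] at hn

theorem mem_tile_of_forall_ne_zero {x : ι → ℤ} (hx : x ∈ box N) (h0 : ∀ i, x i ≠ 0) :
    x ∈ tile N n := by
  refine Or.inl ⟨hx, ?_⟩
  rintro ⟨j, rfl⟩
  exact h0 j (by simp)

theorem update_mem_tile (i : ι) : update n i (N i) ∈ tile N n :=
  Or.inr ⟨i, rfl⟩

theorem mem_tile_of_bounds (hn : ∀ j, 2 ≤ n j ∧ n j ≤ N j - 3) : n ∈ tile N n :=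
  mem_tile_of_forall_ne_zero (mem_box_of_bounds hn) fun i => by have := hn i; omega

theorem update_zero_not_mem_tile (hn : ∀ j, 2 ≤ n j ∧ n j ≤ N j - 3) (j : ι) :
    update n j 0 ∉ tile N n := by
  rintro (⟨-, hP⟩ | ⟨i, hi⟩)
  · exact hP ⟨j, rfl⟩
  · have hii : update n i (N i) i = update n j 0 i := congrFun hi i
    have := hn i
    rcases eq_or_ne i j with rfl | hij
    · rw [update_self, update_self] at hii; omega
    · rw [update_self, update_of_ne hij] at hii; omega

theorem update_zero_injective (hn : ∀ j, 2 ≤ n j ∧ n j ≤ N j - 3) :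
    Injective fun j => update n j 0 := by
  intro i j hij
  by_contra hne
  have hi : update n i 0 i = update n j 0 i := congrFun hij i
  rw [update_self, update_of_ne hne] at hi
  have := hn i
  omega

theorem update_sub_update_zero (i : ι) :
    update n i (N i) - update n i 0 = Pi.single i (N i) := by
  rw [← update_sub, sub_self, sub_zero]
  rfl

theorem residue_update_self (hn : ∀ j, 2 ≤ n j ∧ n j ≤ N j - 3) (i : ι) :
    residue N (update n i (N i)) = update n i 0 := by
  rw [residue_eq_residue_iff.2 (update_sub_update_zero i ▸ single_mem_lattice i)]
  exact residue_of_mem_box (update_mem_box (mem_box_of_bounds hn) (by have := hn i; omega))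

theorem injOn_residue_tile (hn : ∀ j, 2 ≤ n j ∧ n j ≤ N j - 3) : InjOn (residue N) (tile N n) := by
  rintro r (⟨hrB, hrP⟩ | ⟨i, rfl⟩) r' (⟨hrB', hrP'⟩ | ⟨i', rfl⟩) h
  · rwa [residue_of_mem_box hrB, residue_of_mem_box hrB'] at h
  · rw [residue_of_mem_box hrB, residue_update_self hn] at h
    exact absurd ⟨i', h.symm⟩ hrP
  · rw [residue_of_mem_box hrB', residue_update_self hn] at h
    exact absurd ⟨i, h⟩ hrP'
  · rw [residue_update_self hn, residue_update_self hn] at h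
    rw [update_zero_injective hn h]

theorem exists_mem_tile_residue_eq (hn : ∀ j, 2 ≤ n j ∧ n j ≤ N j - 3) (x : ι → ℤ) :
    ∃ r ∈ tile N n, residue N r = residue N x := by
  have hx := residue_mem_box (N := N) (fun j => by have := hn j; omega) x
  by_cases hP : residue N x ∈ range fun j => update n j 0
  · obtain ⟨i, hi⟩ := hP
    exact ⟨_, update_mem_tile i, (residue_update_self hn i).trans hi⟩
  · exact ⟨residue N x, Or.inl ⟨hx, hP⟩, residue_of_mem_box hx⟩

theorem distinctSums_lattice_tile_and_add_eq_univ (hn : ∀ j, 2 ≤ n j ∧ n j ≤ N j - 3) :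
    DistinctSums (lattice N : Set (ι → ℤ)) (tile N n) ∧
      (lattice N : Set (ι → ℤ)) + tile N n = univ :=
  distinctSums_and_add_eq_univ_of_invariant (fun _ _ => residue_eq_residue_iff)
    (injOn_residue_tile hn) (exists_mem_tile_residue_eq hn)

theorem update_zero_sub_mem_sub_of_le (hn : ∀ j, 2 ≤ n j ∧ n j ≤ N j - 3) {r : ι → ℤ}
    (hr : r ∈ box N) {j : ι} (hrj : r j ≤ N j - 2) :
    update n j 0 - r ∈ tile N n - tile N n := by
  obtain ⟨c, hc, hrc, hcn⟩ : ∃ c : ℤ, 1 ≤ c ∧ r j + c ≤ N j - 1 ∧ r j + c ≠ n j := by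
    by_cases h : r j + 1 = n j
    · exact ⟨2, by omega, by have := hn j; omega, by omega⟩
    · exact ⟨1, le_rfl, by omega, h⟩
  have := hr j
  refine mem_sub.2 ⟨update n j c, ?_, update r j (r j + c), ?_, ?_⟩
  · refine mem_tile_of_forall_ne_zero (update_mem_box (mem_box_of_bounds hn) (by omega)) fun i => ?_
    rcases eq_or_ne i j with rfl | hij
    · rw [update_self]; omega
    · rw [update_of_ne hij]; have := hn i; omega
  · exact mem_tile_of_ne (update_mem_box hr (by omega)) j (by rw [update_self]; omega)
      (by rwa [update_self])
  · ext l; simp only [Pi.sub_apply, update_apply]; grind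

theorem update_zero_sub_mem_sub_of_eq (hn : ∀ j, 2 ≤ n j ∧ n j ≤ N j - 3) {r : ι → ℤ}
    (hr : r ∈ box N) {j : ι} (hrj : r j = N j - 1) :
    update n j 0 - r ∈ tile N n - tile N n := by
  have hnj := hn j
  by_cases hι : ∃ i, i ≠ j
  · obtain ⟨i, hij⟩ := hι
    obtain ⟨u, v, hu, hun, hv, huv⟩ : ∃ u v : ℤ, (0 < u ∧ u < N i) ∧ u ≠ n i ∧
        (0 ≤ v ∧ v < N i) ∧ u - v = n i - r i := by
      have := hn i; have := hr i
      by_cases h : r i ≤ N i - 2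
      · exact ⟨n i + 1, r i + 1, by omega, by omega, by omega, by ring⟩
      · exact ⟨n i - 1, r i - 1, by omega, by omega, by omega, by ring⟩
    refine mem_sub.2 ⟨update (update n j 0) i u, ?_, update r i v, ?_, ?_⟩
    · refine mem_tile_of_ne (update_mem_box (update_mem_box (mem_box_of_bounds hn) (by omega))
        (by omega)) i (by rw [update_self]; omega) (by rwa [update_self])
    · exact mem_tile_of_ne (update_mem_box hr hv) j (by rw [update_of_ne hij.symm]; omega)
        (by rw [update_of_ne hij.symm]; omega)
    · ext l; simp only [Pi.sub_apply, update_apply]; grind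
  · push Not at hι
    refine mem_sub.2 ⟨update n j 1, ?_, update n j (N j), update_mem_tile j, ?_⟩
    · exact mem_tile_of_ne (update_mem_box (mem_box_of_bounds hn) (by omega)) j (by simp)
        (by rw [update_self]; omega)
    · ext l; obtain rfl := hι l; simp only [Pi.sub_apply, update_self]; omega

theorem update_zero_sub_update_mem_sub (hn : ∀ j, 2 ≤ n j ∧ n j ≤ N j - 3) {i j : ι}
    (hij : i ≠ j) : update n j 0 - update n i (N i) ∈ tile N n - tile N n := by
  have := hn i; have := hn j
  have hbox := mem_box_of_bounds hn
  refine mem_sub.2 ⟨update (update n j 1) i (n i - 1), ?_,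
    update (update n j (n j + 1)) i (N i - 1), ?_, ?_⟩
  · exact mem_tile_of_ne (update_mem_box (update_mem_box hbox (by omega)) (by omega)) j
      (by simp [hij.symm]) (by rw [update_of_ne hij.symm, update_self]; omega)
  · exact mem_tile_of_ne (update_mem_box (update_mem_box hbox (by omega)) (by omega)) j
      (by rw [update_of_ne hij.symm, update_self]; omega) (by simp [hij.symm])
  · ext l; simp only [Pi.sub_apply, update_apply]; grind

theorem update_zero_sub_mem_sub (hn : ∀ j, 2 ≤ n j ∧ n j ≤ N j - 3) (j : ι) :
    ∀ r ∈ tile N n, r ≠ update n j (N j) → update n j 0 - r ∈ tile N n - tile N n := by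
  rintro r (⟨hr, -⟩ | ⟨i, rfl⟩) hrj
  · rcases (lt_or_eq_of_le (Int.le_sub_one_of_lt (hr j).2)) with h | h
    · exact update_zero_sub_mem_sub_of_le hn hr (by omega)
    · exact update_zero_sub_mem_sub_of_eq hn hr h
  · exact update_zero_sub_update_mem_sub hn fun h => hrj (h ▸ rfl)

theorem single_mem_stabilizer_of_tile (hn : ∀ j, 2 ≤ n j ∧ n j ≤ N j - 3) {A : Set (ι → ℤ)}
    (hA : DistinctSums A (tile N n)) (hAR : A + tile N n = univ) (j : ι) :
    Pi.single j (N j) ∈ AddAction.stabilizer (ι → ℤ) A :=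
  mem_stabilizer_of_forall_sub_mem hA hAR ⟨n, mem_tile_of_bounds hn⟩ fun _ ha => by
    rw [← update_sub_update_zero, sub_sub_eq_add_sub]
    exact add_sub_mem_of_forall_sub_mem_sub hA hAR (update_zero_not_mem_tile hn j)
      (update_zero_sub_mem_sub hn j) ha

end Lattice

theorem statement4_general (k : ℕ) (N n : Fin k → ℤ)
    (hn : ∀ j, 2 ≤ n j ∧ n j ≤ N j - 3)
    (R : Set (Fin k → ℤ))
    (hR : R = ({x : Fin k → ℤ | ∀ j, 0 ≤ x j ∧ x j < N j} \
          Set.range (fun j => Function.update n j 0)) ∪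
          Set.range (fun j => Function.update n j (N j)))
    (A : Set (Fin k → ℤ)) :
    (DistinctSums A R ∧ A + R = Set.univ) ↔
      ∃ y : Fin k → ℤ, A = {x | ∀ j, N j ∣ x j - y j} := by
  change R = tile N n at hR
  subst hR
  have hcoset : ∀ y, {x | ∀ j, N j ∣ x j - y j} = {x | x - y ∈ lattice N} := fun y => by
    simp [mem_lattice]
  obtain ⟨hL, hLR⟩ := distinctSums_lattice_tile_and_add_eq_univ hn
  simp only [hcoset]
  constructor
  · rintro ⟨hA, hAR⟩
    exact exists_eq_setOf_sub_mem hLR hA hAR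
      (lattice_le_of_single_mem (single_mem_stabilizer_of_tile hn hA hAR))
  · rintro ⟨y, rfl⟩
    exact ⟨distinctSums_setOf_sub_mem hL y, setOf_sub_mem_add_eq_univ hLR y⟩

theorem statement4 (k : ℕ) (N n : Fin k → ℤ)
    (hN : ∀ j, 5 ≤ N j) (hn : ∀ j, 2 ≤ n j ∧ n j ≤ N j - 3)
    (R : Set (Fin k → ℤ))
    (hR : R = ({x : Fin k → ℤ | ∀ j, 0 ≤ x j ∧ x j < N j} \
          Set.range (fun j => Function.update n j 0)) ∪
          Set.range (fun j => Function.update n j (N j)))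
    (A : Set (Fin k → ℤ)) :
    (DistinctSums A R ∧ A + R = Set.univ) ↔
      ∃ y : Fin k → ℤ, A = {x | ∀ j, N j ∣ x j - y j} :=
  statement4_general k N n hn R hR A
end

section
/- With R the rigid tile as constructed (N_j ≥ 5, 2 ≤ n_j ≤ N_j − 3), every coset y + Λ₀ of Λ₀ = N₁ℤ × ⋯ × N_kℤ satisfies (y + Λ₀) ⊕ R = ℤ^k. -/
open Pointwise

theorem statement5 (k : ℕ) (N n : Fin k → ℤ)
    (hN : ∀ j, 5 ≤ N j) (hn : ∀ j, 2 ≤ n j ∧ n j ≤ N j - 3)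
    (R : Set (Fin k → ℤ))
    (hR : R = ({x : Fin k → ℤ | ∀ j, 0 ≤ x j ∧ x j < N j} \
          Set.range (fun j => Function.update n j 0)) ∪
          Set.range (fun j => Function.update n j (N j)))
    (y : Fin k → ℤ) :
    DistinctSums {x : Fin k → ℤ | ∀ j, N j ∣ x j - y j} R ∧
      {x : Fin k → ℤ | ∀ j, N j ∣ x j - y j} + R = Set.univ := by
  classical
  have hNpos : ∀ j, (0:ℤ) < N j := fun j => by have := hN j; omega
  -- uniqueness of box representatives within a residue class
  have boxU : ∀ b b' : Fin k → ℤ, (∀ j, 0 ≤ b j ∧ b j < N j) →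
      (∀ j, 0 ≤ b' j ∧ b' j < N j) → (∀ j, N j ∣ b j - b' j) → b = b' := by
    intro b b' hb hb' hd
    funext j
    obtain ⟨c, hc⟩ := hd j
    have h1 := hb j; have h2 := hb' j; have h3 := hNpos j
    have hc0 : c = 0 := by
      by_contra hne
      rcases lt_or_gt_of_ne hne with h | h
      · have : c ≤ -1 := by omega
        nlinarith
      · have : 1 ≤ c := by omega
        nlinarith
    rw [hc0, mul_zero] at hc
    omega
  -- congruence between the removed and added points
  have pqcong : ∀ j i, N i ∣ Function.update n j (N j) i - Function.update n j 0 i := by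
    intro j i
    by_cases h : i = j
    · subst h; simp
    · simp [Function.update_of_ne h]
  -- the removed points are in the box
  have pbox : ∀ j, ∀ i, 0 ≤ Function.update n j 0 i ∧ Function.update n j 0 i < N i := by
    intro j i
    by_cases h : i = j
    · subst h; simp [hNpos i]
    · have := hn i; have := hN i
      simp only [Function.update_of_ne h]
      omega
  -- elements of R congruent mod the lattice are equal
  have Rcong : ∀ r ∈ R, ∀ r' ∈ R, (∀ j, N j ∣ r j - r' j) → r = r' := by
    have key : ∀ r r' : Fin k → ℤ,
        r ∈ ({x : Fin k → ℤ | ∀ j, 0 ≤ x j ∧ x j < N j} \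
          Set.range (fun j => Function.update n j 0)) →
        r' ∈ Set.range (fun j => Function.update n j (N j)) →
        ¬ (∀ j, N j ∣ r j - r' j) := by
      rintro r r' ⟨hbox, hnp⟩ ⟨j, rfl⟩ hd
      apply hnp
      refine ⟨j, ?_⟩
      apply boxU _ _ (pbox j) hbox
      intro i
      have h1 := pqcong j i
      have h2 := hd i
      obtain ⟨c1, e1⟩ := h1; obtain ⟨c2, e2⟩ := h2
      exact ⟨-(c1 + c2), by linarith [e1, e2, mul_add (N i) c1 c2, mul_neg (N i) (c1 + c2)]⟩
    intro r hr r' hr' hd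
    rw [hR] at hr hr'
    rcases hr with hr | hr <;> rcases hr' with hr' | hr'
    · exact boxU _ _ hr.1 hr'.1 hd
    · exact absurd hd (key r r' hr hr')
    · exact absurd (fun j => (dvd_neg.mpr (hd j)).elim (fun c hc => ⟨c, by linarith⟩))
        (key r' r hr' hr)
    · obtain ⟨j, rfl⟩ := hr
      obtain ⟨j', rfl⟩ := hr'
      have hpp : Function.update n j 0 = Function.update n j' 0 := by
        apply boxU _ _ (pbox j) (pbox j')
        intro i
        have h1 := pqcong j i
        have h2 := pqcong j' i
        have h3 := hd i
        obtain ⟨c1, e1⟩ := h1; obtain ⟨c2, e2⟩ := h2; obtain ⟨c3, e3⟩ := h3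
        exact ⟨-c1 + c3 + c2, by push_cast [mul_add, mul_neg] at *; linarith⟩
      have : j = j' := by
        by_contra hne
        have := congrFun hpp j
        rw [Function.update_self, Function.update_of_ne hne] at this
        have := hn j
        omega
      rw [this]
    -- end Rcong
  constructor
  · -- DistinctSums
    intro a ha r hrR a' ha' r' hr'R heq
    have hd : ∀ j, N j ∣ r j - r' j := by
      intro j
      have h1 : a j + r j = a' j + r' j := congrFun heq j
      have h2 := ha j
      have h3 := ha' j
      obtain ⟨c2, e2⟩ := h2; obtain ⟨c3, e3⟩ := h3
      exact ⟨c3 - c2, by rw [mul_sub]; linarith⟩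
    have hrr : r = r' := Rcong r hrR r' hr'R hd
    subst hrr
    refine ⟨?_, rfl⟩
    funext j
    have := congrFun heq j
    simpa using this
  · -- covering
    ext x
    simp only [Set.mem_univ, iff_true]
    set b : Fin k → ℤ := fun j => (x j - y j) % N j with hbdef
    have hbbox : ∀ j, 0 ≤ b j ∧ b j < N j := fun j =>
      ⟨Int.emod_nonneg _ (by have := hNpos j; omega), Int.emod_lt_of_pos _ (hNpos j)⟩
    have hbres : ∀ j, N j ∣ (x j - b j) - y j := by
      intro j
      have := Int.mul_ediv_add_emod (x j - y j) (N j)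
      exact ⟨(x j - y j) / N j, by simp only [hbdef]; linarith⟩
    by_cases hP : ∃ j, b = Function.update n j 0
    · obtain ⟨j0, hb⟩ := hP
      refine Set.mem_add.mpr ⟨x - Function.update n j0 (N j0), ?_,
        Function.update n j0 (N j0), ?_, by abel⟩
      · intro i
        have h1 := hbres i
        have h2 : b i = Function.update n j0 0 i := congrFun hb i
        have h3 := pqcong j0 i
        simp only [Pi.sub_apply]
        obtain ⟨c1, e1⟩ := h1; obtain ⟨c3, e3⟩ := h3
        exact ⟨c1 - c3, by rw [mul_sub]; linarith⟩
      · rw [hR]; exact Or.inr ⟨j0, rfl⟩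
    · refine Set.mem_add.mpr ⟨x - b, ?_, b, ?_, by abel⟩
      · intro i
        simpa using hbres i
      · rw [hR]
        exact Or.inl ⟨hbbox, fun ⟨j, hj⟩ => hP ⟨j, hj.symm⟩⟩
end

section
/- Let G₀ be a finite abelian group and write [[n]] = {n} × G₀ ⊆ ℤ × G₀. Let A⁽⁰⁾, A⁽¹⁾ ⊆ ℤ × G₀ agree on [[n]] for all n ≤ −n₀ (for some n₀), and let F ⊆ ℤ × G₀ be finite with A⁽⁰⁾ ⊕ F = A⁽¹⁾ ⊕ F (both tilings defined). Then for every function ω : ℤ → {0,1}, the mixed set A⁽ω⁾ = ⋃_{n∈ℤ} (A⁽^{ω(n)}⁾ ∩ [[n]]) satisfies A⁽ω⁾ ⊕ F = A⁽⁰⁾ ⊕ F (in particular this sumset is defined). (Swapping property.) -/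
/-!
Encode row `n` of a set `B ⊆ ℤ × G₀` as an element of the group algebra `ℚ[G₀]`, so that `B`
becomes a Laurent series bounded below and the finite set `F` a Laurent polynomial; the numbers of
representations of the points of row `k` in `B ⊕ F` are the coefficients of `Xᵏ` in their product.
The two tilings make the product for `A₁ − A₀` vanish. As `ℚ[G₀]` is reduced (Maschke), this
forces each row of `A₁ − A₀` times each row of `F` to vanish, by comparing lowest terms modulo every
prime ideal. So rows of `A₀` may be exchanged for those of `A₁` at will without changing the
representation counts, which determine both that `A⁽ω⁾ ⊕ F` is defined and what it is.
-/

open Pointwise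

open Finset

section Convolution

variable {R : Type*} [CommRing R] {d f : ℤ → R} {S : Finset ℤ}

-- The product of the lowest nonzero terms of `d` and `f` survives.
theorem eq_zero_or_eq_zero_of_sum_mul_eq_zero [NoZeroDivisors R] (hd : BddBelow d.support)
    (hf : f.support ⊆ S) (hconv : ∀ k, ∑ j ∈ S, d (k - j) * f j = 0) : d = 0 ∨ f = 0 := by
  by_contra! h
  obtain ⟨hm, hi⟩ : sInf d.support ∈ d.support ∧ sInf f.support ∈ f.support :=
    ⟨Int.csInf_mem (Function.support_nonempty_iff.2 h.1) hd,
      Int.csInf_mem (Function.support_nonempty_iff.2 h.2) (S.bddBelow.mono hf)⟩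
  set m := sInf d.support
  set i := sInf f.support
  refine mul_ne_zero hm hi ?_
  rw [← hconv (m + i), sum_eq_single_of_mem i (hf hi) fun j _ hj => ?_, add_sub_cancel_right]
  rcases hj.lt_or_gt with hj | hj
  · rw [Function.notMem_support.1 (notMem_of_lt_csInf hj (S.bddBelow.mono hf)), mul_zero]
  · rw [Function.notMem_support.1 (notMem_of_lt_csInf (by omega) hd), zero_mul]

-- A reduced ring is a subring of the product of its quotients by prime ideals, which are domains.
theorem mul_eq_zero_of_sum_mul_eq_zero [IsReduced R] (hd : BddBelow d.support)
    (hf : f.support ⊆ S) (hconv : ∀ k, ∑ j ∈ S, d (k - j) * f j = 0) (m j : ℤ) :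
    d m * f j = 0 := by
  suffices d m * f j ∈ nilradical R from (mem_nilradical.1 this).eq_zero
  rw [nilradical_eq_sInf, Ideal.mem_sInf]
  intro P (hP : P.IsPrime)
  let π := Ideal.Quotient.mk P
  have hπ := eq_zero_or_eq_zero_of_sum_mul_eq_zero (d := π ∘ d) (f := π ∘ f)
    (hd.mono (Function.support_comp_subset (map_zero π) d))
    ((Function.support_comp_subset (map_zero π) f).trans hf)
    fun k => by
      simpa only [Function.comp_apply, ← map_mul, ← map_sum, map_zero] using congrArg π (hconv k)
  rw [← Ideal.Quotient.eq_zero_iff_mem, map_mul]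
  rcases hπ with h | h
  · rw [show π (d m) = 0 from congrFun h m, zero_mul]
  · rw [show π (f j) = 0 from congrFun h j, mul_zero]

end Convolution

section Representations

open scoped Classical

variable {G : Type*} [AddCommGroup G] {A B : Set G} {F : Finset G}

noncomputable def repCount (B : Set G) (F : Finset G) (t : G) : ℕ :=
  #{q ∈ F | t - q ∈ B}

theorem distinctSums_iff_repCount_le_one : DistinctSums B F ↔ ∀ t, repCount B F t ≤ 1 := by
  constructor
  · intro h t
    refine card_le_one.2 fun q hq q' hq' => ?_
    simp only [mem_filter] at hq hq'
    exact (h _ hq.2 q hq.1 _ hq'.2 q' hq'.1 (by abel)).2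
  · intro h a ha q hq a' ha' q' hq' hsum
    have hqq' : q = q' :=
      card_le_one.1 (h (a + q)) q (mem_filter.2 ⟨hq, by simpa using ha⟩) q'
        (mem_filter.2 ⟨hq', by simpa [hsum] using ha'⟩)
    exact ⟨by simpa [hqq'] using hsum, hqq'⟩

theorem mem_add_iff_repCount_pos {t : G} : t ∈ B + F ↔ 0 < repCount B F t := by
  rw [repCount, card_pos, Set.mem_add]
  constructor
  · rintro ⟨a, ha, q, hq, rfl⟩
    exact ⟨q, mem_filter.2 ⟨hq, by simpa using ha⟩⟩
  · rintro ⟨q, hq⟩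
    rw [mem_filter] at hq
    exact ⟨t - q, hq.2, q, hq.1, sub_add_cancel t q⟩

theorem repCount_eq_ite (h : DistinctSums B F) (t : G) :
    repCount B F t = if t ∈ B + F then 1 else 0 := by
  have := distinctSums_iff_repCount_le_one.1 h t
  split_ifs with ht
  · have := mem_add_iff_repCount_pos.1 ht; omega
  · rw [mem_add_iff_repCount_pos] at ht; omega

theorem repCount_eq_of_add_eq (hA : DistinctSums A F) (hB : DistinctSums B F)
    (heq : A + F = B + F) : repCount A F = repCount B F := by
  ext t
  rw [repCount_eq_ite hA, repCount_eq_ite hB, heq]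

theorem DistinctSums.of_repCount_eq (h : DistinctSums A F) (heq : repCount B F = repCount A F) :
    DistinctSums B F := by
  rw [distinctSums_iff_repCount_le_one, heq]
  exact distinctSums_iff_repCount_le_one.1 h

theorem add_eq_of_repCount_eq (heq : repCount B F = repCount A F) : B + F = A + F :=
  Set.ext fun _ => by rw [mem_add_iff_repCount_pos, mem_add_iff_repCount_pos, heq]

end Representations

section Rows

open scoped Classical

variable {G : Type*} [Fintype G]

noncomputable def row (B : Set (ℤ × G)) (n : ℤ) : AddMonoidAlgebra ℚ G :=
  .ofCoeff (Finsupp.equivFunOnFinite.symm fun x => if (n, x) ∈ B then 1 else 0)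

theorem coeff_row (B : Set (ℤ × G)) (n : ℤ) (x : G) :
    (row B n).coeff x = if (n, x) ∈ B then 1 else 0 := by
  simp [row]

theorem row_congr {B B' : Set (ℤ × G)} {n : ℤ} (h : ∀ x, (n, x) ∈ B ↔ (n, x) ∈ B') :
    row B n = row B' n := by
  simp only [row, h]

variable [AddCommGroup G]

-- The coefficient of `Xᵏ` in the product of the Laurent series `∑ₙ row B n Xⁿ` and `∑ⱼ row F j Xʲ`
-- over `ℚ[G]`.
noncomputable def rowConv (B : Set (ℤ × G)) (F : Finset (ℤ × G)) (k : ℤ) : AddMonoidAlgebra ℚ G :=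
  ∑ j ∈ F.image Prod.fst, row B (k - j) * row F j

theorem coeff_row_mul_row (B C : Set (ℤ × G)) (m j : ℤ) (z : G) :
    (row B m * row C j).coeff z = ∑ y, if (m, z - y) ∈ B ∧ (j, y) ∈ C then 1 else 0 := by
  rw [AddMonoidAlgebra.coeff_mul_apply_right, Finsupp.sum_fintype _ _ (by simp)]
  refine sum_congr rfl fun y _ => ?_
  simp only [coeff_row, ← sub_eq_add_neg, ite_mul, one_mul, zero_mul, ite_and]

theorem coeff_rowConv (B : Set (ℤ × G)) (F : Finset (ℤ × G)) (k : ℤ) (z : G) :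
    (rowConv B F k).coeff z = repCount B F (k, z) := by
  have hF : F ⊆ F.image Prod.fst ×ˢ univ := fun q hq =>
    mem_product.2 ⟨mem_image_of_mem Prod.fst hq, mem_univ _⟩
  calc (rowConv B F k).coeff z
      = ∑ j ∈ F.image Prod.fst, ∑ y, if (k - j, z - y) ∈ B ∧ (j, y) ∈ F then 1 else 0 := by
        simp only [rowConv, AddMonoidAlgebra.coeff_sum, Finsupp.coe_finsetSum,
          Finset.sum_apply, coeff_row_mul_row, mem_coe]
    _ = ∑ q ∈ F.image Prod.fst ×ˢ univ, if q ∈ F then (if (k, z) - q ∈ B then 1 else 0) else 0 := by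
        rw [sum_product]
        refine sum_congr rfl fun j _ => sum_congr rfl fun y _ => ?_
        rw [← ite_and]
        exact if_congr and_comm rfl rfl
    _ = repCount B F (k, z) := by
        rw [sum_ite_mem, inter_eq_right.2 hF, repCount, natCast_card_filter]

theorem rowConv_eq_iff {A B : Set (ℤ × G)} {F : Finset (ℤ × G)} :
    rowConv A F = rowConv B F ↔ repCount A F = repCount B F := by
  constructor
  · intro h
    funext t
    exact_mod_cast (coeff_rowConv A F t.1 t.2).symm.trans
      ((congrArg (fun u => u.coeff t.2) (congrFun h t.1)).trans (coeff_rowConv B F t.1 t.2))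
  · intro h
    funext k
    ext z
    rw [coeff_rowConv, coeff_rowConv, h]

theorem row_mul_row_eq_of_rowConv_eq {A B : Set (ℤ × G)} {F : Finset (ℤ × G)} (N : ℤ)
    (hagree : ∀ n ≤ N, ∀ x, (n, x) ∈ A ↔ (n, x) ∈ B) (h : rowConv A F = rowConv B F) (m j : ℤ) :
    row A m * row F j = row B m * row F j := by
  rw [← sub_eq_zero, ← sub_mul]
  -- `ℚ[G]` is reduced, being semisimple by Maschke's theorem.
  refine mul_eq_zero_of_sum_mul_eq_zero (d := fun m => row A m - row B m) (S := F.image Prod.fst)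
    ⟨N, fun m hm => not_lt.1 fun hlt => hm (sub_eq_zero.2 (row_congr (hagree m hlt.le)))⟩
    (fun j hj => ?_) (fun k => ?_) m j
  · by_contra hj'
    refine hj (AddMonoidAlgebra.ext (Finsupp.ext fun y => ?_))
    simp only [coeff_row, mem_coe, AddMonoidAlgebra.coeff_zero]
    exact if_neg fun hy => hj' (mem_image_of_mem Prod.fst hy)
  · simp only [sub_mul, sum_sub_distrib]
    exact sub_eq_zero.2 (congrFun h k)

end Rows

theorem statement6 {G₀ : Type*} [AddCommGroup G₀] [Fintype G₀]
    (A₀ A₁ : Set (ℤ × G₀)) (F : Set (ℤ × G₀)) (hF : F.Finite)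
    (n₀ : ℤ)
    (hagree : ∀ n : ℤ, n ≤ -n₀ → ∀ x : G₀, ((n, x) ∈ A₀ ↔ (n, x) ∈ A₁))
    (h₀ : DistinctSums A₀ F) (h₁ : DistinctSums A₁ F)
    (heq : A₀ + F = A₁ + F)
    (ω : ℤ → Bool) :
    DistinctSums {p : ℤ × G₀ | if ω p.1 then p ∈ A₁ else p ∈ A₀} F ∧
      {p : ℤ × G₀ | if ω p.1 then p ∈ A₁ else p ∈ A₀} + F = A₀ + F := by
  lift F to Finset (ℤ × G₀) using hF
  set B := {p : ℤ × G₀ | if ω p.1 then p ∈ A₁ else p ∈ A₀}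
  have hrow : ∀ m j, row A₁ m * row F j = row A₀ m * row F j :=
    row_mul_row_eq_of_rowConv_eq (-n₀) (fun n hn x => (hagree n hn x).symm)
      (rowConv_eq_iff.2 (repCount_eq_of_add_eq h₁ h₀ heq.symm))
  have hB : rowConv B F = rowConv A₀ F := by
    funext k
    refine sum_congr rfl fun j _ => ?_
    cases hω : ω (k - j)
    · rw [row_congr (B' := A₀) fun x => by simp [B, hω]]
    · rw [row_congr (B' := A₁) fun x => by simp [B, hω], hrow]
  have hcount := rowConv_eq_iff.1 hB
  exact ⟨h₀.of_repCount_eq hcount, add_eq_of_repCount_eq hcount⟩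
end

section
/- Let A ⊆ S_{ℤ₄²} satisfy: (1) A ⊕ τ((2ℤ₄)²) = B, where B = {α ∈ S_{ℤ₄²} : π(α) ∈ {−1,1}²} and the tiling holds with respect to the group operation α + β = α ∘ β with the summands τ(h) on the right; and (2) for every cycle σ ∈ S_{ℤ₄²} (a permutation acting as a single 16-cycle on ℤ₄²) and every φ in the stabilizer of {−1,1}² pointwise, A ⊕ {φ, σ, 2σ, …, 15σ} = S_{ℤ₄²}. Then A = {α ∈ S_{ℤ₄²} : π(α) = y} for some y ∈ {−1,1}². Conversely any such set satisfies (1) and (2). -/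
open Pointwise

/-- The 16-element set on which our permutations act. -/
abbrev X4 := ZMod 4 × ZMod 4

/-- The Hamming cube `{-1,1}²`, viewed as the coset `(1,1) + (2ℤ₄)²` in `ℤ₄²`. -/
def Hcube : Set X4 := {y | (y.1 = 1 ∨ y.1 = -1) ∧ (y.2 = 1 ∨ y.2 = -1)}

/-- `π(α) = α⁻¹(0,0)`. -/
def piMap (α : Equiv.Perm X4) : X4 := α⁻¹ 0

/-- All products `a ∘ f` (`a ∈ A`, `f ∈ F`) are distinct. -/
def DistinctProds (A F : Set (Equiv.Perm X4)) : Prop :=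
  ∀ a ∈ A, ∀ f ∈ F, ∀ a' ∈ A, ∀ f' ∈ F, a * f = a' * f' → a = a' ∧ f = f'

/-- The (nonabelian) tiling equation `A ⊕ F = E`, with the tile acting on the right. -/
def PTiles (A F E : Set (Equiv.Perm X4)) : Prop := DistinctProds A F ∧ A * F = E

/-- A permutation of `ℤ₄²` acting as a single 16-cycle. -/
def IsCycle16 (σ : Equiv.Perm X4) : Prop := σ.IsCycle ∧ σ.support = Finset.univ

/-- The pointwise stabilizer of the Hamming cube `{-1,1}²`. -/
def StabH : Set (Equiv.Perm X4) := {φ | ∀ y ∈ Hcube, φ y = y}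

/-!
Since `π (α ∘ f) = f⁻¹ (π α)`, the fibre `π⁻¹ y` tiles with a tile `F` as soon as `f ↦ f⁻¹ y` is
injective on `F`, and the product is then the preimage of the image. For the translations by
`(2ℤ₄)²` that image is `y + (2ℤ₄)² = {-1,1}²`; for `{φ, σ, …, 15σ}` it is all of `ℤ₄²`, because
`φ` fixes `y` and `σ` is a 16-cycle. This gives the converse.

For the direct implication, (1) puts `π(A)` inside the cube `{-1,1}²`, and (2) forbids `a⁻¹ ∘ b`
(`a, b ∈ A`) to map exactly one point `z` of the cube into the cube, and to a point other than `z`: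
such a map agrees on the cube with a 16-cycle `σ`, and `φ = (a⁻¹ ∘ b)⁻¹ ∘ σ` fixes the cube while
`b ∘ φ = a ∘ σ`. If `a, b ∈ A` had `π a = y ≠ y' = π b`, take `k` fixing `y'` and sending every
other point of the cube and of its image under `b⁻¹ ∘ a` off the cube. By (1), `b ∘ k⁻¹ = c ∘ τ(h)`
with `c ∈ A`, and then `c⁻¹ ∘ a` (if `h = 0`) or `c⁻¹ ∘ b` (if `h ≠ 0`) is such a forbidden map.
So `π` is constant on `A`, and (1) forces `A` to be the whole fibre.
-/

open Equiv Finset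

theorem Equiv.Perm.exists_isCycle_support_eq_univ_isChain {α : Type*} [Fintype α]
    [DecidableEq α] (hα : 2 ≤ Fintype.card α) {l : List α} (hl : l.Nodup) :
    ∃ σ : Perm α, σ.IsCycle ∧ σ.support = univ ∧ l.IsChain (fun x y => σ x = y) := by
  set l' := l ++ (univ \ l.toFinset).toList
  have hnd : l'.Nodup :=
    List.nodup_append.2 ⟨hl, Finset.nodup_toList _, fun x hx y hy => by rintro rfl; simp_all⟩
  have hl' : l'.toFinset = univ := eq_univ_of_forall fun x => by by_cases x ∈ l <;> simp [l', *]
  have hlen : l'.length = Fintype.card α := by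
    rw [← List.toFinset_card_of_nodup hnd, hl', card_univ]
  refine ⟨l'.formPerm, List.isCycle_formPerm hnd (by omega), ?_, ?_⟩
  · rw [List.support_formPerm_of_nodup l' hnd fun x h => by simp [h] at hlen; omega, hl']
  · exact (List.isChain_iff_getElem.2 fun i hi => List.formPerm_apply_lt_getElem l' hnd i hi).prefix
      (List.prefix_append _ _)

theorem Equiv.Perm.exists_apply_eq_self_mapsTo_compl {α : Type*} [Fintype α] [DecidableEq α]
    {p : α} {t : Finset α} (hpt : p ∈ t) (s : Finset α) (hps : p ∉ s)
    (hcard : #s + #t ≤ Fintype.card α) :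
    ∃ k : Perm α, k p = p ∧ Set.MapsTo k s (↑t)ᶜ := by
  induction s using Finset.induction_on with
  | empty => exact ⟨1, rfl, fun x hx => by simp at hx⟩
  | insert a s ha ih =>
    rw [mem_insert, not_or] at hps
    rw [card_insert_of_notMem ha] at hcard
    obtain ⟨k, hkp, hks⟩ := ih hps.2 (by omega)
    by_cases hka : k a ∈ t
    swap
    · refine ⟨k, hkp, fun x hx => ?_⟩
      rcases mem_insert.1 hx with rfl | hx
      · exact hka
      · exact hks hx
    obtain ⟨b, hb⟩ : ∃ b, b ∉ t ∪ s.image k := by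
      have : #(t ∪ s.image k) < Fintype.card α :=
        (card_union_le _ _).trans_lt (by have := card_image_le (s := s) (f := k); omega)
      by_contra! h
      exact (card_lt_iff_ne_univ _).1 this (eq_univ_of_forall h)
    simp only [mem_union, mem_image, not_or, not_exists, not_and] at hb
    refine ⟨swap (k a) b * k, ?_, fun x hx => ?_⟩
    · rw [Perm.mul_apply, hkp, swap_apply_of_ne_of_ne]
      · exact fun h => hps.1 (k.injective (hkp.trans h))
      · exact fun h => hb.1 (h ▸ hpt)
    · rcases mem_insert.1 hx with rfl | hx
      · simpa using hb.1
      · rw [Perm.mul_apply, swap_apply_of_ne_of_ne]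
        · exact hks hx
        · exact fun h => ha (k.injective h ▸ hx)
        · exact fun h => hb.2 x hx h

instance : DecidablePred (· ∈ Hcube) :=
  fun y => inferInstanceAs (Decidable ((y.1 = 1 ∨ y.1 = -1) ∧ (y.2 = 1 ∨ y.2 = -1)))

theorem card_toFinset_Hcube : #Hcube.toFinset = 4 := by decide

theorem card_X4 : Fintype.card X4 = 16 := rfl

def piFiber (y : X4) : Set (Perm X4) := {α | piMap α = y}

def evenShifts : Set (Perm X4) :=
  {p | ∃ h : X4, (h.1 = 0 ∨ h.1 = 2) ∧ (h.2 = 0 ∨ h.2 = 2) ∧ p = (Equiv.subRight h : Perm X4)}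

def cycleTile (σ φ : Perm X4) : Set (Perm X4) :=
  {p | p = φ ∨ ∃ k : ℕ, 1 ≤ k ∧ k ≤ 15 ∧ p = σ ^ k}

theorem add_mem_Hcube_iff {h : X4} (h1 : h.1 = 0 ∨ h.1 = 2) (h2 : h.2 = 0 ∨ h.2 = 2) {x : X4} :
    x + h ∈ Hcube ↔ x ∈ Hcube := by
  revert h x; decide

theorem sub_mem_Hcube_iff {h : X4} (h1 : h.1 = 0 ∨ h.1 = 2) (h2 : h.2 = 0 ∨ h.2 = 2) {x : X4} :
    x - h ∈ Hcube ↔ x ∈ Hcube := by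
  revert h x; decide

theorem subRight_sub_mem_evenShifts {x y : X4} (hx : x ∈ Hcube) (hy : y ∈ Hcube) :
    Equiv.subRight (x - y) ∈ evenShifts := by
  refine ⟨x - y, ?_, ?_, rfl⟩ <;> revert x y <;> decide

@[simp] theorem subRight_inv_apply (h x : X4) : (Equiv.subRight h : Perm X4)⁻¹ x = x + h := by
  simp [Perm.inv_def]

theorem piMap_mul (a f : Perm X4) : piMap (a * f) = f⁻¹ (piMap a) := by
  simp [piMap, mul_inv_rev, Perm.mul_apply]

theorem ptiles_piFiber (y : X4) {F : Set (Perm X4)} (hF : Set.InjOn (fun f : Perm X4 => f⁻¹ y) F) :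
    PTiles (piFiber y) F {β | piMap β ∈ (fun f : Perm X4 => f⁻¹ y) '' F} := by
  refine ⟨fun a ha f hf a' ha' f' hf' heq => ?_, Set.ext fun β => ⟨?_, ?_⟩⟩
  · have hff : f = f' := hF hf hf' <| by
      simpa only [piMap_mul, show piMap a = y from ha, show piMap a' = y from ha'] using
        congrArg piMap heq
    exact ⟨mul_right_cancel (hff ▸ heq), hff⟩
  · rintro ⟨a, ha, f, hf, rfl⟩
    exact ⟨f, hf, by rw [piMap_mul, show piMap a = y from ha]⟩
  · rintro ⟨f, hf, hβ⟩
    refine ⟨β * f⁻¹, ?_, f, hf, inv_mul_cancel_right β f⟩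
    simp [piFiber, piMap_mul, ← hβ]

theorem ptiles_piFiber_evenShifts {y : X4} (hy : y ∈ Hcube) :
    PTiles (piFiber y) evenShifts {β | piMap β ∈ Hcube} := by
  have himage : (fun f : Perm X4 => f⁻¹ y) '' evenShifts = Hcube := by
    refine Set.ext fun x => ⟨?_, fun hx => ⟨_, subRight_sub_mem_evenShifts hx hy, by simp⟩⟩
    rintro ⟨_, ⟨h, h1, h2, rfl⟩, rfl⟩
    simpa [add_mem_Hcube_iff h1 h2] using hy
  rw [← himage]
  refine ptiles_piFiber y ?_
  rintro _ ⟨h, -, -, rfl⟩ _ ⟨h', -, -, rfl⟩ heq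
  obtain rfl : h = h' := by simpa using heq
  rfl

namespace IsCycle16

variable {σ : Perm X4} (hσ : IsCycle16 σ)
include hσ

theorem orderOf_eq : orderOf σ = 16 := by
  rw [hσ.1.orderOf, hσ.2, card_univ, card_X4]

theorem pow_inv_apply_inj {j k : ℕ} (hj : j < 16) (hk : k < 16) {y : X4}
    (h : (σ ^ j)⁻¹ y = (σ ^ k)⁻¹ y) : j = k := by
  have hx : σ ((σ ^ j)⁻¹ y) ≠ (σ ^ j)⁻¹ y := Perm.mem_support.1 (hσ.2 ▸ mem_univ _)
  have hjk : σ ^ j = σ ^ k := hσ.1.pow_eq_pow_iff.2 ⟨_, hx, by nth_rw 2 [h]; simp⟩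
  rwa [pow_inj_mod, hσ.orderOf_eq, Nat.mod_eq_of_lt hj, Nat.mod_eq_of_lt hk] at hjk

theorem exists_pow_inv_apply_eq (x y : X4) : ∃ k < 16, (σ ^ k)⁻¹ y = x := by
  have hsupp : ∀ z, σ z ≠ z := fun z => Perm.mem_support.1 (hσ.2 ▸ mem_univ z)
  obtain ⟨i, hi⟩ := hσ.1.exists_pow_eq (hsupp x) (hsupp y)
  refine ⟨i % 16, Nat.mod_lt _ (by norm_num), ?_⟩
  rw [Perm.inv_eq_iff_eq, ← hσ.orderOf_eq, pow_mod_orderOf, hi]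

end IsCycle16

theorem ptiles_piFiber_cycleTile {y : X4} (hy : y ∈ Hcube) {σ φ : Perm X4} (hσ : IsCycle16 σ)
    (hφ : φ ∈ StabH) : PTiles (piFiber y) (cycleTile σ φ) Set.univ := by
  have hφy : φ⁻¹ y = (σ ^ 0)⁻¹ y := by
    rw [pow_zero, inv_one, Perm.one_apply, Perm.inv_eq_iff_eq, hφ y hy]
  have himage : (fun f : Perm X4 => f⁻¹ y) '' cycleTile σ φ = Set.univ := by
    refine Set.eq_univ_of_forall fun x => ?_
    obtain ⟨k, hk, hkx⟩ := hσ.exists_pow_inv_apply_eq x y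
    rcases Nat.eq_zero_or_pos k with rfl | hk0
    · exact ⟨φ, Or.inl rfl, hφy.trans hkx⟩
    · exact ⟨σ ^ k, Or.inr ⟨k, hk0, by omega, rfl⟩, hkx⟩
  have hinj : Set.InjOn (fun f : Perm X4 => f⁻¹ y) (cycleTile σ φ) := by
    rintro f (rfl | ⟨j, hj1, hj2, rfl⟩) f' (rfl | ⟨k, hk1, hk2, rfl⟩) h <;> simp only at h
    · rfl
    · have := hσ.pow_inv_apply_inj (by omega) (by omega) (hφy.symm.trans h); omega
    · have := hσ.pow_inv_apply_inj (by omega) (by omega) (h.trans hφy); omega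
    · rw [hσ.pow_inv_apply_inj (by omega) (by omega) h]
  simpa only [himage, Set.mem_univ, Set.ofPred_true] using ptiles_piFiber y hinj

def CubeLink (μ : Perm X4) (z : X4) : Prop :=
  z ∈ Hcube ∧ μ z ∈ Hcube ∧ μ z ≠ z ∧ ∀ w ∈ Hcube, w ≠ z → μ w ∉ Hcube

theorem exists_isCycle16_eqOn_Hcube {μ : Perm X4} {z : X4} (hμ : CubeLink μ z) :
    ∃ σ, IsCycle16 σ ∧ Set.EqOn σ μ Hcube := by
  obtain ⟨hz, ht, hzt, hout⟩ := hμ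
  set R := (Hcube.toFinset.erase z).erase (μ z)
  have hR : ∀ w, w ∈ R ↔ w ≠ μ z ∧ w ≠ z ∧ w ∈ Hcube := by simp [R]
  have hRcard : #R = 2 := by
    rw [card_erase_of_mem (by simp [hzt, ht]), card_erase_of_mem (by simpa using hz),
      card_toFinset_Hcube]
  obtain ⟨u, v, huv, hRuv⟩ := card_eq_two.1 hRcard
  have hu := (hR u).1 (by simp [hRuv])
  have hv := (hR v).1 (by simp [hRuv])
  have hcover : ∀ w ∈ Hcube, w = z ∨ w = μ z ∨ w = u ∨ w = v := fun w hw => by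
    by_contra! h
    have := (hR w).2 ⟨h.2.1, h.1, hw⟩
    simp [hRuv, h.2.2.1, h.2.2.2] at this
  have hnd : [z, μ z, μ (μ z), u, μ u, v, μ v].Nodup := by
    have := hout _ ht hzt
    have := hout _ hu.2.2 hu.2.1
    have := hout _ hv.2.2 hv.2.1
    clear hout hcover hR hRuv hRcard
    simp only [List.nodup_cons, List.mem_cons, EmbeddingLike.apply_eq_iff_eq, List.not_mem_nil,
      List.nodup_nil]
    grind
  obtain ⟨σ, hσ, hσu, hchain⟩ :=
    Perm.exists_isCycle_support_eq_univ_isChain (by rw [card_X4]; norm_num) hnd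
  simp only [List.isChain_cons_cons, List.isChain_singleton] at hchain
  refine ⟨σ, ⟨hσ, hσu⟩, fun w hw => ?_⟩
  rcases hcover w hw with rfl | rfl | rfl | rfl <;> grind

theorem not_cubeLink_inv_mul {A : Set (Perm X4)}
    (hA : ∀ σ φ, IsCycle16 σ → φ ∈ StabH → DistinctProds A (cycleTile σ φ))
    {a b : Perm X4} (ha : a ∈ A) (hb : b ∈ A) (z : X4) : ¬ CubeLink (a⁻¹ * b) z := by
  intro hlink
  obtain ⟨σ, hσ, hσμ⟩ := exists_isCycle16_eqOn_Hcube hlink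
  set φ := (a⁻¹ * b)⁻¹ * σ
  have hφ : φ ∈ StabH := fun w hw => by simp [φ, Perm.mul_apply, hσμ hw]
  have hprod : b * φ = a * σ ^ 1 := by simp only [φ, pow_one]; group
  obtain ⟨-, hφσ⟩ := hA σ φ hσ hφ b hb φ (Or.inl rfl) a ha (σ ^ 1)
    (Or.inr ⟨1, le_rfl, by norm_num, rfl⟩) hprod
  have := hφ z hlink.1
  rw [hφσ, pow_one, hσμ hlink.1] at this
  exact hlink.2.2.1 this

section ShiftCover

variable {A : Set (Perm X4)} (hA : A * evenShifts = {β | piMap β ∈ Hcube})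
include hA

theorem piMap_mem_Hcube_of_mul_evenShifts {a : Perm X4} (ha : a ∈ A) : piMap a ∈ Hcube := by
  have : a ∈ A * evenShifts :=
    ⟨a, ha, 1, ⟨0, Or.inl rfl, Or.inl rfl, by ext <;> simp⟩, mul_one a⟩
  rwa [hA] at this

theorem piMap_eq_of_mul_evenShifts
    (hA' : ∀ σ φ, IsCycle16 σ → φ ∈ StabH → DistinctProds A (cycleTile σ φ))
    {a b : Perm X4} (ha : a ∈ A) (hb : b ∈ A) : piMap a = piMap b := by
  by_contra hne
  set y := piMap a
  set y' := piMap b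
  have hy := piMap_mem_Hcube_of_mul_evenShifts hA ha
  have hy' := piMap_mem_Hcube_of_mul_evenShifts hA hb
  set θ := b⁻¹ * a
  have hθy : θ y = y' := by simp [θ, y, y', piMap, Perm.mul_apply]
  set S := (Hcube.toFinset ∪ Hcube.toFinset.image θ).erase y'
  have hS : #S + #Hcube.toFinset ≤ Fintype.card X4 := by
    have := card_union_le Hcube.toFinset (Hcube.toFinset.image θ)
    have := card_image_le (s := Hcube.toFinset) (f := θ)
    rw [card_erase_of_mem (mem_union_left _ (Set.mem_toFinset.2 hy')), card_toFinset_Hcube,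
      card_X4] at *
    omega
  obtain ⟨k, hky', hkS⟩ := Perm.exists_apply_eq_self_mapsTo_compl (Set.mem_toFinset.2 hy') S
    (notMem_erase _ _) hS
  have hkS' : ∀ x ∈ S, k x ∉ Hcube := fun x hx => by simpa using hkS hx
  have hβ : b * k⁻¹ ∈ A * evenShifts := by
    rw [hA, Set.mem_ofPred_eq, piMap_mul, inv_inv, hky']; exact hy'
  obtain ⟨c, hc, _, ⟨h, h1, h2, rfl⟩, hβ⟩ := hβ
  have hcinv : c⁻¹ = Equiv.subRight h * k * b⁻¹ := by
    rw [show c = b * k⁻¹ * (Equiv.subRight h)⁻¹ by rw [← hβ, mul_inv_cancel_right]]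
    group
  by_cases h0 : h = 0
  · subst h0
    have hμ : ∀ w, (c⁻¹ * a) w = k (θ w) := by simp [hcinv, θ, Perm.mul_apply]
    refine not_cubeLink_inv_mul hA' hc ha y ⟨hy, ?_, ?_, fun w hw hwy => ?_⟩
    · rwa [hμ, hθy, hky']
    · rw [hμ, hθy, hky']; exact Ne.symm hne
    · rw [hμ]
      refine hkS' _ (mem_erase.2 ⟨fun h => hwy (θ.injective (h.trans hθy.symm)), ?_⟩)
      exact mem_union_right _ (mem_image_of_mem θ (Set.mem_toFinset.2 hw))
  · have hμ : ∀ w, (c⁻¹ * b) w = k w - h := by simp [hcinv, Perm.mul_apply]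
    refine not_cubeLink_inv_mul hA' hc hb y' ⟨hy', ?_, ?_, fun w hw hwy => ?_⟩
    · rwa [hμ, hky', sub_mem_Hcube_iff h1 h2]
    · rwa [hμ, hky', Ne, sub_eq_self]
    · rw [hμ, sub_mem_Hcube_iff h1 h2]
      exact hkS' _ (mem_erase.2 ⟨hwy, mem_union_left _ (Set.mem_toFinset.2 hw)⟩)

theorem exists_eq_piFiber_of_mul_evenShifts
    (hA' : ∀ σ φ, IsCycle16 σ → φ ∈ StabH → DistinctProds A (cycleTile σ φ)) :
    ∃ y ∈ Hcube, A = piFiber y := by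
  have hB : Equiv.subRight ((1, 1) : X4) ∈ A * evenShifts := by
    rw [hA]; exact (show ((1, 1) : X4) ∈ Hcube by decide)
  obtain ⟨a₀, ha₀, -⟩ := hB
  refine ⟨piMap a₀, piMap_mem_Hcube_of_mul_evenShifts hA ha₀, Set.ext fun β => ⟨fun hβ =>
    piMap_eq_of_mul_evenShifts hA hA' hβ ha₀, fun hβ => ?_⟩⟩
  have : β ∈ A * evenShifts := by
    rw [hA, Set.mem_ofPred_eq, show piMap β = piMap a₀ from hβ]
    exact piMap_mem_Hcube_of_mul_evenShifts hA ha₀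
  obtain ⟨c, hc, _, ⟨h, -, -, rfl⟩, rfl⟩ := this
  have hpi : piMap c + h = piMap c := by
    rw [← subRight_inv_apply, ← piMap_mul, piMap_eq_of_mul_evenShifts hA hA' hc ha₀]
    exact hβ
  obtain rfl : h = 0 := by simpa using hpi
  convert hc
  ext <;> simp

end ShiftCover

theorem statement11 (A : Set (Equiv.Perm X4)) :
    (PTiles A
        {p : Equiv.Perm X4 | ∃ h : X4, (h.1 = 0 ∨ h.1 = 2) ∧ (h.2 = 0 ∨ h.2 = 2) ∧
          p = (Equiv.subRight h : Equiv.Perm X4)}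
        {α : Equiv.Perm X4 | piMap α ∈ Hcube} ∧
      ∀ σ φ : Equiv.Perm X4, IsCycle16 σ → φ ∈ StabH →
        PTiles A {p : Equiv.Perm X4 | p = φ ∨ ∃ k : ℕ, 1 ≤ k ∧ k ≤ 15 ∧ p = σ ^ k}
          Set.univ) ↔
    ∃ y ∈ Hcube, A = {α : Equiv.Perm X4 | piMap α = y} := by
  constructor
  · rintro ⟨hshift, hcycle⟩
    exact exists_eq_piFiber_of_mul_evenShifts hshift.2 fun σ φ hσ hφ => (hcycle σ φ hσ hφ).1
  · rintro ⟨y, hy, rfl⟩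
    exact ⟨ptiles_piFiber_evenShifts hy, fun σ φ hσ hφ => ptiles_piFiber_cycleTile hy hσ hφ⟩
end

section
/- In ℤ × ℤ₄, the pairs (A₁, A₂) of subsets of ℤ × ℤ₄ solving simultaneously the tiling equations A₁ ⊕ {(0,0),(0,2)} ⊎ A₂ ⊕ {(0,1),(0,3)} = ℤ × ℤ₄ and A₁ ⊕ {(0,0)} ⊎ A₂ ⊕ {(−1,0)} = ℤ × {−1,1} are exactly the pairs A_j = {(n, f_j(n)) : n ∈ ℤ} (j = 1,2) for functions f₁, f₂ : ℤ → {−1,1} ⊆ ℤ₄ satisfying f₂(n+1) = −f₁(n) for all n ∈ ℤ. -/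
open Pointwise

/-- The tiling equation `A₁ ⊕ F₁ ⊎ A₂ ⊕ F₂ = E`. -/
def Tiles2 {G : Type*} [AddCommGroup G] (A₁ F₁ A₂ F₂ E : Set G) : Prop :=
  DistinctSums A₁ F₁ ∧ DistinctSums A₂ F₂ ∧ Disjoint (A₁ + F₁) (A₂ + F₂) ∧
    (A₁ + F₁) ∪ (A₂ + F₂) = E

lemma mem_add_single {G : Type*} [AddCommGroup G] (A : Set G) (c p : G) :
    p ∈ A + {c} ↔ p - c ∈ A := by
  rw [Set.add_singleton]
  constructor
  · rintro ⟨a, ha, rfl⟩; simpa using ha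
  · intro h; exact ⟨p - c, h, sub_add_cancel _ _⟩

lemma graph_add_single (f : ℤ → ZMod 4) (k : ℤ) (c : ZMod 4) :
    ({p : ℤ × ZMod 4 | p.2 = f p.1} + {(k, c)}) =
      {p : ℤ × ZMod 4 | p.2 = f (p.1 - k) + c} := by
  ext p
  rw [mem_add_single]
  simp only [Set.mem_setOf_eq, Prod.snd_sub, Prod.fst_sub, sub_eq_iff_eq_add]

lemma graph_add_pair (f : ℤ → ZMod 4) (c₁ c₂ : ZMod 4) :
    ({p : ℤ × ZMod 4 | p.2 = f p.1} + {((0:ℤ), c₁), ((0:ℤ), c₂)}) =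
      {p : ℤ × ZMod 4 | p.2 = f p.1 + c₁ ∨ p.2 = f p.1 + c₂} := by
  rw [Set.insert_eq, Set.add_union, graph_add_single, graph_add_single]
  ext p
  simp [sub_zero]

lemma graph_distinct (f : ℤ → ZMod 4) (S : Set (ℤ × ZMod 4)) (hS : ∀ s ∈ S, s.1 = 0) :
    DistinctSums {p : ℤ × ZMod 4 | p.2 = f p.1} S := by
  intro a ha g hg a' ha' g' hg' h
  have h1 : a.1 + g.1 = a'.1 + g'.1 := congrArg Prod.fst h
  rw [hS g hg, hS g' hg', add_zero, add_zero] at h1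
  have haa : a = a' := Prod.ext h1 (ha.trans ((by rw [h1] : f a.1 = f a'.1).trans ha'.symm))
  refine ⟨haa, ?_⟩
  rw [haa] at h
  exact add_left_cancel h

lemma distinct_single {G : Type*} [AddCommGroup G] (A : Set G) (c : G) :
    DistinctSums A {c} := by
  intro a ha f hf a' ha' f' hf' h
  rw [Set.mem_singleton_iff] at hf hf'
  subst hf; subst hf'
  exact ⟨add_right_cancel h, rfl⟩

theorem statement14 (A₁ A₂ : Set (ℤ × ZMod 4)) :
    (Tiles2 A₁ ({((0 : ℤ), (0 : ZMod 4)), (0, 2)} : Set (ℤ × ZMod 4))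
        A₂ ({((0 : ℤ), (1 : ZMod 4)), (0, 3)} : Set (ℤ × ZMod 4)) Set.univ ∧
      Tiles2 A₁ ({((0 : ℤ), (0 : ZMod 4))} : Set (ℤ × ZMod 4))
        A₂ ({((-1 : ℤ), (0 : ZMod 4))} : Set (ℤ × ZMod 4))
        {p : ℤ × ZMod 4 | p.2 = -1 ∨ p.2 = 1}) ↔
    ∃ f₁ f₂ : ℤ → ZMod 4,
      (∀ n, f₁ n = -1 ∨ f₁ n = 1) ∧ (∀ n, f₂ n = -1 ∨ f₂ n = 1) ∧
      (∀ n, f₂ (n + 1) = -f₁ n) ∧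
      A₁ = {p : ℤ × ZMod 4 | p.2 = f₁ p.1} ∧ A₂ = {p : ℤ × ZMod 4 | p.2 = f₂ p.1} := by
  classical
  constructor
  · rintro ⟨⟨d₁, d₂, -, -⟩, -, -, disj2, un2⟩
    -- membership characterizations from the second tiling equation
    have key : ∀ (n : ℤ) (x : ZMod 4),
        ((n, x) ∈ A₁ ∨ (n + 1, x) ∈ A₂) ↔ (x = -1 ∨ x = 1) := by
      intro n x
      have h := Set.ext_iff.1 un2 (n, x)
      simp only [Set.mem_union, mem_add_single, Set.mem_setOf_eq, Prod.mk_sub_mk,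
        sub_zero, sub_neg_eq_add] at h
      exact h
    have keyd : ∀ (n : ℤ) (x : ZMod 4), (n, x) ∈ A₁ → (n + 1, x) ∉ A₂ := by
      intro n x h1 h2
      have m1 : (n, x) ∈ A₁ + {((0 : ℤ), (0 : ZMod 4))} := by
        rw [mem_add_single]
        simpa only [Prod.mk_sub_mk, sub_zero] using h1
      have m2 : (n, x) ∈ A₂ + {((-1 : ℤ), (0 : ZMod 4))} := by
        rw [mem_add_single]
        simpa only [Prod.mk_sub_mk, sub_zero, sub_neg_eq_add] using h2
      exact Set.disjoint_left.1 disj2 m1 m2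
    have hA1 : ∀ n : ℤ, ¬(((n, (1 : ZMod 4)) ∈ A₁) ∧ ((n, (-1 : ZMod 4)) ∈ A₁)) := by
      rintro n ⟨h1, h3⟩
      have := d₁ (n, 1) h1 (0, 2) (by simp) (n, -1) h3 (0, 0) (by simp)
        (by rw [Prod.mk_add_mk, Prod.mk_add_mk]; exact Prod.ext_iff.2 ⟨by ring, by show (1 : ZMod 4) + 2 = -1 + 0; decide⟩)
      exact absurd this.2 (by simp only [Prod.mk.injEq]; decide)
    have hA2 : ∀ n : ℤ, ¬(((n, (1 : ZMod 4)) ∈ A₂) ∧ ((n, (-1 : ZMod 4)) ∈ A₂)) := by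
      rintro n ⟨h1, h3⟩
      have := d₂ (n, 1) h1 (0, 3) (by simp) (n, -1) h3 (0, 1) (by simp)
        (by rw [Prod.mk_add_mk, Prod.mk_add_mk]; exact Prod.ext_iff.2 ⟨by ring, by show (1 : ZMod 4) + 3 = -1 + 1; decide⟩)
      exact absurd this.2 (by simp only [Prod.mk.injEq]; decide)
    have exA1 : ∀ n : ℤ, ((n, (1 : ZMod 4)) ∈ A₁ ∧ (n, (-1 : ZMod 4)) ∉ A₁) ∨
        ((n, (1 : ZMod 4)) ∉ A₁ ∧ (n, (-1 : ZMod 4)) ∈ A₁) := by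
      intro n
      by_cases h1 : (n, (1 : ZMod 4)) ∈ A₁
      · exact Or.inl ⟨h1, fun h3 => hA1 n ⟨h1, h3⟩⟩
      · refine Or.inr ⟨h1, ?_⟩
        have h2 : (n + 1, (1 : ZMod 4)) ∈ A₂ := by
          rcases (key n 1).2 (Or.inr rfl) with h | h
          · exact absurd h h1
          · exact h
        rcases (key n (-1)).2 (Or.inl rfl) with h | h
        · exact h
        · exact absurd ⟨h2, h⟩ (hA2 (n + 1))
    have exA2 : ∀ n : ℤ, ((n, (1 : ZMod 4)) ∈ A₂ ∧ (n, (-1 : ZMod 4)) ∉ A₂) ∨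
        ((n, (1 : ZMod 4)) ∉ A₂ ∧ (n, (-1 : ZMod 4)) ∈ A₂) := by
      intro n
      by_cases h1 : (n, (1 : ZMod 4)) ∈ A₂
      · exact Or.inl ⟨h1, fun h3 => hA2 n ⟨h1, h3⟩⟩
      · refine Or.inr ⟨h1, ?_⟩
        have k1 := key (n - 1) 1
        have k3 := key (n - 1) (-1)
        rw [sub_add_cancel] at k1 k3
        have hin : (n - 1, (1 : ZMod 4)) ∈ A₁ := by
          rcases k1.2 (Or.inr rfl) with h | h
          · exact h
          · exact absurd h h1
        rcases k3.2 (Or.inl rfl) with h | h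
        · exact absurd ⟨hin, h⟩ (hA1 (n - 1))
        · exact h
    have A1sub : ∀ p ∈ A₁, p.2 = -1 ∨ p.2 = 1 := by
      intro p hp
      exact (key p.1 p.2).1 (Or.inl (by simpa using hp))
    have A2sub : ∀ p ∈ A₂, p.2 = -1 ∨ p.2 = 1 := by
      intro p hp
      have k := key (p.1 - 1) p.2
      rw [sub_add_cancel] at k
      exact k.1 (Or.inr (by simpa using hp))
    refine ⟨fun n => if (n, (1 : ZMod 4)) ∈ A₁ then 1 else -1,
      fun n => if (n, (1 : ZMod 4)) ∈ A₂ then 1 else -1, ?_, ?_, ?_, ?_, ?_⟩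
    · intro n
      show (if (n, (1 : ZMod 4)) ∈ A₁ then (1 : ZMod 4) else -1) = -1 ∨
        (if (n, (1 : ZMod 4)) ∈ A₁ then (1 : ZMod 4) else -1) = 1
      by_cases h : (n, (1 : ZMod 4)) ∈ A₁ <;> simp [h]
    · intro n
      show (if (n, (1 : ZMod 4)) ∈ A₂ then (1 : ZMod 4) else -1) = -1 ∨
        (if (n, (1 : ZMod 4)) ∈ A₂ then (1 : ZMod 4) else -1) = 1
      by_cases h : (n, (1 : ZMod 4)) ∈ A₂ <;> simp [h]
    · intro n
      show (if (n + 1, (1 : ZMod 4)) ∈ A₂ then (1 : ZMod 4) else -1) =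
        -(if (n, (1 : ZMod 4)) ∈ A₁ then (1 : ZMod 4) else -1)
      by_cases h : (n, (1 : ZMod 4)) ∈ A₁
      · rw [if_pos h, if_neg (keyd n 1 h)]
      · have h2 : (n + 1, (1 : ZMod 4)) ∈ A₂ := by
          rcases (key n 1).2 (Or.inr rfl) with h' | h'
          · exact absurd h' h
          · exact h'
        rw [if_neg h, if_pos h2]; decide
    · ext ⟨n, x⟩
      show (n, x) ∈ A₁ ↔ x = if (n, (1 : ZMod 4)) ∈ A₁ then 1 else -1
      constructor
      · intro hp
        rcases A1sub (n, x) hp with h | h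
        · have hx : x = -1 := h
          subst hx
          rw [if_neg (fun h1 => hA1 n ⟨h1, hp⟩)]
        · have hx : x = 1 := h
          subst hx
          rw [if_pos hp]
      · intro hx
        by_cases h : (n, (1 : ZMod 4)) ∈ A₁
        · rw [if_pos h] at hx; subst hx; exact h
        · rw [if_neg h] at hx
          subst hx
          rcases exA1 n with ⟨h1, -⟩ | ⟨-, h3⟩
          · exact absurd h1 h
          · exact h3
    · ext ⟨n, x⟩
      show (n, x) ∈ A₂ ↔ x = if (n, (1 : ZMod 4)) ∈ A₂ then 1 else -1
      constructor
      · intro hp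
        rcases A2sub (n, x) hp with h | h
        · have hx : x = -1 := h
          subst hx
          rw [if_neg (fun h1 => hA2 n ⟨h1, hp⟩)]
        · have hx : x = 1 := h
          subst hx
          rw [if_pos hp]
      · intro hx
        by_cases h : (n, (1 : ZMod 4)) ∈ A₂
        · rw [if_pos h] at hx; subst hx; exact h
        · rw [if_neg h] at hx
          subst hx
          rcases exA2 n with ⟨h1, -⟩ | ⟨-, h3⟩
          · exact absurd h1 h
          · exact h3
  · rintro ⟨f₁, f₂, hf₁, hf₂, hrel, rfl, rfl⟩
    have e2 : ({p : ℤ × ZMod 4 | p.2 = f₂ p.1} + {((-1 : ℤ), (0 : ZMod 4))}) =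
        {p : ℤ × ZMod 4 | p.2 = -f₁ p.1} := by
      rw [graph_add_single]
      ext p
      simp only [Set.mem_setOf_eq, sub_neg_eq_add, add_zero, hrel p.1]
    have e1 : ({p : ℤ × ZMod 4 | p.2 = f₁ p.1} + {((0 : ℤ), (0 : ZMod 4))}) =
        {p : ℤ × ZMod 4 | p.2 = f₁ p.1} := by
      rw [graph_add_single]
      ext p
      simp only [Set.mem_setOf_eq, sub_zero, add_zero]
    refine ⟨⟨?_, ?_, ?_, ?_⟩, ?_, ?_, ?_, ?_⟩
    · exact graph_distinct f₁ _ (by rintro s (rfl | rfl) <;> rfl)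
    · exact graph_distinct f₂ _ (by rintro s (rfl | rfl) <;> rfl)
    · rw [graph_add_pair, graph_add_pair, Set.disjoint_left]
      intro p hp hq
      simp only [Set.mem_setOf_eq] at hp hq
      rcases hf₁ p.1 with h1 | h1 <;> rcases hf₂ p.1 with h2 | h2 <;>
        rw [h1] at hp <;> rw [h2] at hq <;>
        rcases hp with hp | hp <;> rcases hq with hq | hq <;>
        exact absurd (hp.symm.trans hq) (by decide)
    · rw [graph_add_pair, graph_add_pair]
      ext p
      simp only [Set.mem_union, Set.mem_setOf_eq, Set.mem_univ, iff_true]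
      rcases hf₁ p.1 with h1 | h1 <;> rcases hf₂ p.1 with h2 | h2 <;>
        rw [h1, h2] <;> generalize p.2 = x <;> revert x <;> decide
    · exact distinct_single _ _
    · exact distinct_single _ _
    · rw [e1, e2, Set.disjoint_left]
      intro p hp hq
      simp only [Set.mem_setOf_eq] at hp hq
      rcases hf₁ p.1 with h1 | h1 <;> rw [h1] at hp hq <;>
        exact absurd (hp.symm.trans hq) (by decide)
    · rw [e1, e2]
      ext p
      simp only [Set.mem_union, Set.mem_setOf_eq]
      rcases hf₁ p.1 with h1 | h1 <;> rw [h1] <;> generalize p.2 = x <;> revert x <;> decide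
end

section
/- Let Λ₀ = N₁ℤ × ⋯ × N_kℤ ⊆ ℤ^k and suppose A ⊆ ℤ^k is closed under subtraction of each N_j e_j (i.e., a ∈ A implies a − N_j e_j ∈ A for all j), and A ⊕ R = ℤ^k for some finite R with |R| = N₁⋯N_k. Then A is contained in a single coset of Λ₀, and consequently A equals that coset. -/
/-!
Write each `x` as `a + ρ(x)` with `a ∈ A`, `ρ(x) ∈ R`. Since `A - Nⱼeⱼ ⊆ A`, uniqueness of the
representation gives `ρ(x - Nⱼeⱼ) = ρ(x)`, so `ρ` is `Λ₀`-periodic and induces a map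
`ℤᵏ ⧸ Λ₀ → R`, which is onto. Both sides have `∏ Nⱼ` elements, so it is a bijection: for
`a, b ∈ A` and `r ∈ R`, `ρ(a + r) = r = ρ(b + r)` forces `a ≡ b (mod Λ₀)`, and conversely every
`x ≡ b` has `ρ(x + r) = ρ(b + r) = r`, i.e. `x ∈ A`.
-/

open Pointwise

theorem AddSubgroup.neg_add_mem_of_eq_of_index_le_card_range {G α : Type*} [AddGroup G]
    {H : AddSubgroup G} [H.FiniteIndex] {f : G → α} (hf : ∀ x, ∀ h ∈ H, f (x + h) = f x)
    (hcard : H.index ≤ Nat.card (Set.range f)) {x y : G} (hxy : f x = f y) : -x + y ∈ H := by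
  let g : G ⧸ H → Set.range f := Quotient.lift (fun x => ⟨f x, x, rfl⟩) fun u v huv =>
    Subtype.ext (by simpa using (hf u _ (QuotientAddGroup.leftRel_apply.mp huv)).symm)
  have hg : Function.Surjective g := by
    rintro ⟨_, x, rfl⟩
    exact ⟨x, rfl⟩
  exact QuotientAddGroup.eq.mp ((hg.bijective_of_nat_card_le hcard).injective (Subtype.ext hxy))

namespace DistinctSums

variable {G : Type*} [AddCommGroup G] {A R : Set G}

-- junk unless `A + R = univ`
noncomputable def rightSummand (A R : Set G) (x : G) : G :=
  Classical.epsilon fun r => r ∈ R ∧ x - r ∈ A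

theorem rightSummand_spec (htile : A + R = Set.univ) (x : G) :
    rightSummand A R x ∈ R ∧ x - rightSummand A R x ∈ A := by
  obtain ⟨a, ha, r, hr, rfl⟩ := Set.mem_add.mp (Set.eq_univ_iff_forall.mp htile x)
  exact Classical.epsilon_spec (p := fun s => s ∈ R ∧ a + r - s ∈ A) ⟨r, hr, by simpa using ha⟩

theorem rightSummand_add (hd : DistinctSums A R) (htile : A + R = Set.univ) {a r : G}
    (ha : a ∈ A) (hr : r ∈ R) : rightSummand A R (a + r) = r := by
  obtain ⟨hr', ha'⟩ := rightSummand_spec htile (a + r)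
  exact (hd _ ha' _ hr' _ ha _ hr (sub_add_cancel _ _)).2

theorem rightSummand_sub_of_forall_sub_mem (hd : DistinctSums A R) (htile : A + R = Set.univ)
    {g : G} (hg : ∀ a ∈ A, a - g ∈ A) (x : G) : rightSummand A R (x - g) = rightSummand A R x := by
  obtain ⟨hr, ha⟩ := rightSummand_spec htile x
  have := rightSummand_add hd htile (hg _ ha) hr
  rwa [sub_right_comm, sub_add_cancel] at this

theorem rightSummand_add_of_mem_closure (hd : DistinctSums A R) (htile : A + R = Set.univ)
    {S : Set G} (hS : ∀ g ∈ S, ∀ a ∈ A, a - g ∈ A) (x : G) {v : G}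
    (hv : v ∈ AddSubgroup.closure S) : rightSummand A R (x + v) = rightSummand A R x := by
  induction hv using AddSubgroup.closure_induction generalizing x with
  | mem g hg =>
    rw [← rightSummand_sub_of_forall_sub_mem hd htile (hS g hg), add_sub_cancel_right]
  | zero => rw [add_zero]
  | add u v _ _ hu hv => rw [← add_assoc, hv, hu]
  | neg u _ hu => rw [← hu, neg_add_cancel_right]

theorem range_rightSummand (hd : DistinctSums A R) (htile : A + R = Set.univ) :
    Set.range (rightSummand A R) = R := by
  obtain ⟨a, ha, -, -, -⟩ := Set.mem_add.mp (Set.eq_univ_iff_forall.mp htile 0)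
  refine Set.Subset.antisymm ?_ fun r hr => ⟨a + r, rightSummand_add hd htile ha hr⟩
  rintro _ ⟨x, rfl⟩
  exact (rightSummand_spec htile x).1

theorem exists_eq_coset (hd : DistinctSums A R) (htile : A + R = Set.univ)
    {S : Set G} (hS : ∀ g ∈ S, ∀ a ∈ A, a - g ∈ A) [(AddSubgroup.closure S).FiniteIndex]
    (hcard : (AddSubgroup.closure S).index ≤ R.ncard) :
    ∃ y, A = {x | x - y ∈ AddSubgroup.closure S} := by
  obtain ⟨b, hb, r, hr, -⟩ := Set.mem_add.mp (Set.eq_univ_iff_forall.mp htile 0)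
  have hf : ∀ x, ∀ v ∈ AddSubgroup.closure S, rightSummand A R (x + v) = rightSummand A R x :=
    fun x _ => rightSummand_add_of_mem_closure hd htile hS x
  refine ⟨b, Set.Subset.antisymm (fun a ha => ?_) fun x hx => ?_⟩
  · rw [← range_rightSummand hd htile, ← Nat.card_coe_set_eq] at hcard
    simpa [neg_add_eq_sub] using AddSubgroup.neg_add_mem_of_eq_of_index_le_card_range hf hcard
      ((rightSummand_add hd htile hb hr).trans (rightSummand_add hd htile ha hr).symm)
  · have hxr : rightSummand A R (x + r) = r :=
      calc rightSummand A R (x + r) = rightSummand A R (b + r + (x - b)) := by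
            rw [add_right_comm, add_sub_cancel]
        _ = r := by rw [hf _ _ hx, rightSummand_add hd htile hb hr]
    simpa [hxr] using (rightSummand_spec htile (x + r)).2

end DistinctSums

theorem AddSubgroup.closure_range_single_eq_pi {ι : Type*} [DecidableEq ι] [Finite ι]
    {G : ι → Type*} [∀ i, AddGroup (G i)] (g : ∀ i, G i) :
    AddSubgroup.closure (Set.range fun i => Pi.single i (g i)) =
      AddSubgroup.pi Set.univ fun i => AddSubgroup.zmultiples (g i) := by
  refine le_antisymm ((AddSubgroup.closure_le _).2 ?_) (AddSubgroup.pi_le_iff.2 fun i => ?_)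
  · rintro _ ⟨j, rfl⟩ i -
    by_cases h : i = j
    · subst h
      simp
    · simp [h]
  · rw [AddMonoidHom.map_zmultiples, AddSubgroup.zmultiples_le]
    exact AddSubgroup.subset_closure ⟨i, rfl⟩

theorem Int.index_pi_zmultiples {ι : Type*} [Fintype ι] (N : ι → ℤ) :
    (AddSubgroup.pi Set.univ fun i => AddSubgroup.zmultiples (N i)).index = (∏ i, N i).natAbs := by
  rw [AddSubgroup.index_pi]
  simp only [Int.index_zmultiples]
  exact (map_prod Int.natAbsHom N _).symm

theorem statement16 (k : ℕ) (N : Fin k → ℤ)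
    (A : Set (Fin k → ℤ))
    (hclosed : ∀ a ∈ A, ∀ j : Fin k, (fun i => a i - if i = j then N j else 0) ∈ A)
    (R : Set (Fin k → ℤ)) (hRfin : R.Finite)
    (hcard : (R.ncard : ℤ) = ∏ j, N j)
    (hd : DistinctSums A R) (htile : A + R = Set.univ) :
    ∃ y : Fin k → ℤ, A = {x | ∀ j, N j ∣ x j - y j} := by
  have hS : ∀ g ∈ Set.range (fun j => Pi.single j (N j)), ∀ a ∈ A, a - g ∈ A := by
    rintro _ ⟨j, rfl⟩ a ha
    convert hclosed a ha j using 1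
    ext i
    by_cases h : i = j <;> simp [h]
  have hindex : (AddSubgroup.closure (Set.range fun j => Pi.single j (N j))).index = R.ncard := by
    rw [AddSubgroup.closure_range_single_eq_pi, Int.index_pi_zmultiples, ← hcard, Int.natAbs_natCast]
  have : (AddSubgroup.closure (Set.range fun j => Pi.single j (N j))).FiniteIndex :=
    ⟨hindex ▸ ((Set.ncard_pos hRfin).2 (Set.univ_nonempty.mono htile.ge).of_add_right).ne'⟩
  obtain ⟨y, rfl⟩ := hd.exists_eq_coset htile hS hindex.le
  refine ⟨y, Set.ext fun x => ?_⟩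
  simp [AddSubgroup.closure_range_single_eq_pi, AddSubgroup.mem_pi, Int.mem_zmultiples_iff]
end

section
/- Let N₁,…,N_k ≥ 5, Λ₀ = N₁ℤ × ⋯ × N_kℤ, and let R be the rigid tile (box with bumps). If A ⊆ ℤ^k satisfies A ⊕ R = ℤ^k, then for every a ∈ A and every j = 1,…,k, the point a + (n₁,…,n_{j−1},0,n_{j+1},…,n_k) does not lie in a + R, and the unique a' ∈ A with this point in a' + R is a' = a − N_j e_j. In particular A is closed under subtraction of each N_j e_j. -/
open Pointwise

namespace Statement18Aux

variable {k : ℕ}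

/-- The standard basis "direction" vector. -/
def sgl (i : Fin k) : Fin k → ℤ := fun p => if p = i then 1 else 0

/-- Membership predicate for the rigid tile `R`. -/
def P (N n : Fin k → ℤ) (x : Fin k → ℤ) : Prop :=
  ((∀ i, 0 ≤ x i ∧ x i < N i) ∧ ∀ m, x ≠ Function.update n m 0) ∨
    ∃ m, x = Function.update n m (N m)

lemma core (N n : Fin k → ℤ) (hN : ∀ j, 5 ≤ N j) (hn : ∀ j, 2 ≤ n j ∧ n j ≤ N j - 3)
    (j : Fin k) (r : Fin k → ℤ) (hP : P N n r)
    (hj : ¬ P N n (r + sgl j))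
    (hi : ∀ i, i ≠ j → ¬ P N n (r + sgl i) ∧ ¬ P N n (r - sgl i)) :
    r = Function.update n j (N j) := by
  rcases hP with ⟨hbox, hhole⟩ | ⟨m, rfl⟩
  · -- box case: derive a contradiction
    exfalso
    have hz : ∀ i, i ≠ j → r i = 0 := by
      intro i hij
      by_contra hri
      have hbox' : ∀ p, 0 ≤ (r - sgl i) p ∧ (r - sgl i) p < N p := by
        intro p
        have h1 := hbox p
        have h2 := hbox i
        by_cases hpi : p = i <;> simp [sgl, hpi, Pi.sub_apply] <;> omega
      have hm : ∃ m, r - sgl i = Function.update n m 0 := by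
        by_contra hc
        push_neg at hc
        exact (hi i hij).2 (Or.inl ⟨hbox', hc⟩)
      obtain ⟨m, hm⟩ := hm
      have hrval : r = Function.update n m 0 + sgl i := by
        have := sub_eq_iff_eq_add.mp hm
        exact this
      apply hj
      rw [hrval]
      left
      constructor
      · intro p
        have hNp := hN p
        have hnp := hn p
        have hNm := hN m
        have hnm := hn m
        have hNi := hN i
        have hni := hn i
        have hNj := hN j
        have hnj := hn j
        simp only [Pi.add_apply, Function.update_apply, sgl]
        by_cases h1 : p = m <;> by_cases h2 : p = i <;> by_cases h3 : p = j <;>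
          simp [h1, h2, h3] <;> omega
      · intro m' heq
        have h := congrFun heq i
        have hni := hn i
        have hnm := hn m
        have hnm' := hn m'
        simp only [Pi.add_apply, Function.update_apply, sgl, if_pos rfl] at h
        rw [if_neg hij] at h
        by_cases h1 : i = m <;> by_cases h2 : i = m' <;> simp [h1, h2] at h <;> omega
    by_cases hex : ∃ i, i ≠ j
    · obtain ⟨i, hij⟩ := hex
      apply (hi i hij).1
      left
      constructor
      · intro p
        have hNp := hN p
        have h1 := hbox p
        by_cases hpi : p = i
        · subst hpi
          simp [sgl, hz p hij]
          omega
        · simp [sgl, hpi]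
          omega
      · intro m' heq
        have h := congrFun heq i
        have hni := hn i
        have hnm' := hn m'
        simp only [Pi.add_apply, Function.update_apply, sgl, if_pos rfl, hz i hij] at h
        by_cases h2 : i = m' <;> simp [h2] at h <;> omega
    · push_neg at hex
      have hrj : r j ≠ 0 := by
        intro h0
        apply hhole j
        funext p
        rw [hex p]
        simp [h0, Function.update_apply]
      apply hj
      have hb := hbox j
      by_cases hlt : r j + 1 < N j
      · left
        constructor
        · intro p
          rw [hex p]
          simp [sgl]
          omega
        · intro m' heq
          have h := congrFun heq j
          have hm' := hex m'
          have hnm' := hn m'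
          simp only [Pi.add_apply, Function.update_apply, sgl, if_pos rfl, hm'] at h
          simp at h
          omega
      · right
        refine ⟨j, ?_⟩
        funext p
        rw [hex p]
        simp [sgl, Function.update_apply]
        omega
  · -- top case: m must equal j
    by_cases hmj : m = j
    · rw [hmj]
    · exfalso
      apply (hi m hmj).2
      left
      constructor
      · intro p
        have hNp := hN p
        have hnp := hn p
        have hNm := hN m
        have hnm := hn m
        simp only [Pi.sub_apply, Function.update_apply, sgl]
        by_cases h1 : p = m <;> simp [h1] <;> omega
      · intro m' heq
        have h := congrFun heq m'
        have hnm' := hn m'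
        have hNm := hN m
        have hNm' := hN m'
        simp only [Pi.sub_apply, Function.update_apply, sgl, if_pos rfl] at h
        by_cases h1 : m' = m <;> simp [h1] at h <;> omega

lemma probe_j (N n : Fin k → ℤ) (hN : ∀ j, 5 ≤ N j) (hn : ∀ j, 2 ≤ n j ∧ n j ≤ N j - 3)
    (j : Fin k) : P N n (Function.update n j 0 + sgl j) := by
  left
  constructor
  · intro p
    have hNp := hN p
    have hnp := hn p
    have hNj := hN j
    have hnj := hn j
    simp only [Pi.add_apply, Function.update_apply, sgl]
    by_cases h1 : p = j <;> simp [h1] <;> omega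
  · intro m' heq
    have h := congrFun heq j
    have hnj := hn j
    have hnm' := hn m'
    simp only [Pi.add_apply, Function.update_apply, sgl, if_pos rfl] at h
    by_cases h2 : j = m' <;> simp [h2] at h <;> omega

lemma probe_add (N n : Fin k → ℤ) (hN : ∀ j, 5 ≤ N j) (hn : ∀ j, 2 ≤ n j ∧ n j ≤ N j - 3)
    (j i : Fin k) (hij : i ≠ j) : P N n (Function.update n j 0 + sgl i) := by
  left
  constructor
  · intro p
    have hNp := hN p
    have hnp := hn p
    have hNj := hN j
    have hnj := hn j
    have hNi := hN i
    have hni := hn i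
    simp only [Pi.add_apply, Function.update_apply, sgl]
    by_cases h1 : p = j <;> by_cases h2 : p = i <;> simp [h1, h2] <;> omega
  · intro m' heq
    have h := congrFun heq i
    have hni := hn i
    have hnm' := hn m'
    have hnj := hn j
    simp only [Pi.add_apply, Function.update_apply, sgl, if_pos rfl] at h
    rw [if_neg hij] at h
    by_cases h2 : i = m' <;> by_cases h3 : i = j <;> simp [h2, h3] at h <;> omega

lemma probe_sub (N n : Fin k → ℤ) (hN : ∀ j, 5 ≤ N j) (hn : ∀ j, 2 ≤ n j ∧ n j ≤ N j - 3)
    (j i : Fin k) (hij : i ≠ j) : P N n (Function.update n j 0 - sgl i) := by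
  left
  constructor
  · intro p
    have hNp := hN p
    have hnp := hn p
    have hNj := hN j
    have hnj := hn j
    have hNi := hN i
    have hni := hn i
    simp only [Pi.sub_apply, Function.update_apply, sgl]
    by_cases h1 : p = j <;> by_cases h2 : p = i <;> simp [h1, h2] <;> omega
  · intro m' heq
    have h := congrFun heq i
    have hni := hn i
    have hnm' := hn m'
    have hnj := hn j
    simp only [Pi.sub_apply, Function.update_apply, sgl, if_pos rfl] at h
    rw [if_neg hij] at h
    by_cases h2 : i = m' <;> by_cases h3 : i = j <;> simp [h2, h3] at h <;> omega

end Statement18Aux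

theorem statement18 (k : ℕ) (N n : Fin k → ℤ)
    (hN : ∀ j, 5 ≤ N j) (hn : ∀ j, 2 ≤ n j ∧ n j ≤ N j - 3)
    (R : Set (Fin k → ℤ))
    (hR : R = ({x : Fin k → ℤ | ∀ j, 0 ≤ x j ∧ x j < N j} \
          Set.range (fun j => Function.update n j 0)) ∪
          Set.range (fun j => Function.update n j (N j)))
    (A : Set (Fin k → ℤ)) (hd : DistinctSums A R) (htile : A + R = Set.univ) :
    ∀ a ∈ A, ∀ j : Fin k,
      (∀ r ∈ R, a + r ≠ a + Function.update n j 0) ∧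
      (∀ a' ∈ A, ∀ r ∈ R, a' + r = a + Function.update n j 0 →
        a' = fun i => a i - if i = j then N j else 0) ∧
      (fun i => a i - if i = j then N j else 0) ∈ A := by
  intro a ha j
  have hmem : ∀ x, x ∈ R ↔ Statement18Aux.P N n x := by
    intro x
    rw [hR]
    simp only [Statement18Aux.P, Set.mem_union, Set.mem_diff, Set.mem_setOf_eq,
      Set.mem_range, not_exists]
    constructor
    · rintro (⟨h1, h2⟩ | ⟨m, hm⟩)
      · exact Or.inl ⟨h1, fun m hm => h2 m hm.symm⟩
      · exact Or.inr ⟨m, hm.symm⟩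
    · rintro (⟨h1, h2⟩ | ⟨m, hm⟩)
      · exact Or.inl ⟨h1, fun m hm => h2 m hm.symm⟩
      · exact Or.inr ⟨m, hm.symm⟩
  have hole_notin : Function.update n j 0 ∉ R := by
    rw [hmem]
    rintro (⟨_, hh⟩ | ⟨m, hm⟩)
    · exact hh j rfl
    · have h := congrFun hm m
      have hnm := hn m
      have hNm := hN m
      have hnj := hn j
      have hNj := hN j
      simp only [Function.update_apply, if_pos rfl] at h
      by_cases h1 : m = j <;> simp [h1] at h <;> omega
  have key : ∀ a' ∈ A, ∀ r ∈ R, a' + r = a + Function.update n j 0 →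
      a' = fun i => a i - if i = j then N j else 0 := by
    intro a' ha' r hr heq
    have hane : a' ≠ a := by
      rintro rfl
      apply hole_notin
      have : r = Function.update n j 0 := add_left_cancel heq
      rw [← this]
      exact hr
    have hprobe : ∀ d : Fin k → ℤ, Statement18Aux.P N n (Function.update n j 0 + d) →
        ¬ Statement18Aux.P N n (r + d) := by
      intro d hdm hrd
      have h2 : a' + (r + d) = a + (Function.update n j 0 + d) := by
        rw [← add_assoc, ← add_assoc, heq]
      exact hane (hd a' ha' (r + d) ((hmem _).mpr hrd) a ha _ ((hmem _).mpr hdm) h2).1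
    have hrtop : r = Function.update n j (N j) := by
      apply Statement18Aux.core N n hN hn j r ((hmem r).mp hr)
      · exact hprobe _ (Statement18Aux.probe_j N n hN hn j)
      · intro i hij
        constructor
        · exact hprobe _ (Statement18Aux.probe_add N n hN hn j i hij)
        · intro hrd
          apply hprobe (- Statement18Aux.sgl i) _ (by rwa [← sub_eq_add_neg])
          rw [← sub_eq_add_neg]
          exact Statement18Aux.probe_sub N n hN hn j i hij
    funext i
    have h := congrFun heq i
    rw [hrtop] at h
    simp only [Pi.add_apply, Function.update_apply] at h
    by_cases h1 : i = j <;> simp [h1] at h ⊢ <;> omega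
  refine ⟨?_, key, ?_⟩
  · intro r hr heq
    apply hole_notin
    have : r = Function.update n j 0 := add_left_cancel heq
    rw [← this]
    exact hr
  · have hcov : a + Function.update n j 0 ∈ A + R := by
      rw [htile]; exact Set.mem_univ _
    obtain ⟨x, hx, y, hy, hxy⟩ := Set.mem_add.mp hcov
    have := key x hx y hy hxy
    rw [← this]
    exact hx
end
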